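/- arXiv:2402.18860 — 7 statements merged into one kernel-verified Lean document; each statement's English description precedes it below -/
import Mathlib

section
/- Let x₁, …, x_{n+1} be affinely independent points in ℝⁿ and let φᵢ be the i-th hat function associated with these points. Then φᵢ is differentiable with constant derivative, and the Euclidean norm of its gradient satisfies ‖∇φᵢ‖ = 1 / eᵢ, where eᵢ = dist(xᵢ, affineSpan{xⱼ : j ≠ i}) is the height of the simplex with respect to the facet opposite xᵢ. -/
set_option maxHeartbeats 1000000

open Metric EuclideanGeometry Submodule RealInnerProductSpace in
private theorem stmt0_norm {n : ℕ} (x : Fin (n + 1) → EuclideanSpace ℝ (Fin n))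
    (hx : AffineIndependent ℝ x) (i : Fin (n + 1))
    (φ : EuclideanSpace ℝ (Fin n) →ᵃ[ℝ] ℝ)
    (hφ : ∀ j, φ (x j) = if j = i then 1 else 0) :
      ‖LinearMap.toContinuousLinearMap φ.linear‖ =
        1 / Metric.infDist (x i) (affineSpan ℝ (x '' {j | j ≠ i}) : Set (EuclideanSpace ℝ (Fin n))) := by
  set L := LinearMap.toContinuousLinearMap φ.linear with hL
  rcases Nat.eq_zero_or_pos n with hn | hn
  · subst hn
    have hset : {j : Fin 1 | j ≠ i} = ∅ := by
      ext j; simp [Subsingleton.elim j i]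
    have hL0 : L = 0 := by
      ext v
      have : v = 0 := Subsingleton.elim v 0
      simp [this]
    rw [hset, hL0, Set.image_empty, AffineSubspace.span_empty]
    simp [Metric.infDist_empty]
  · obtain ⟨m, rfl⟩ : ∃ m, n = m + 1 := ⟨n - 1, (Nat.succ_pred_eq_of_pos hn).symm⟩
    set W : AffineSubspace ℝ (EuclideanSpace ℝ (Fin (m+1))) :=
      affineSpan ℝ (x '' {j | j ≠ i}) with hW
    obtain ⟨j₀, hj₀⟩ := exists_ne i
    haveI hne : Nonempty W := ⟨⟨x j₀, subset_affineSpan ℝ _ ⟨j₀, hj₀, rfl⟩⟩⟩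
    have hW0 : ∀ p ∈ W, φ p = 0 := by
      intro p hp
      have hle : W ≤ AffineSubspace.comap φ (AffineSubspace.mk' (0:ℝ) ⊥) := by
        rw [hW, affineSpan_le]
        rintro _ ⟨j, hj, rfl⟩
        simp only [AffineSubspace.coe_comap, Set.mem_preimage, SetLike.mem_coe,
          AffineSubspace.mem_mk', vsub_eq_sub, sub_zero, Submodule.mem_bot]
        have hj' : j ≠ i := hj
        simp [hφ j, hj']
      have := hle hp
      simpa [AffineSubspace.mem_comap, AffineSubspace.mem_mk'] using this
    have hLdir : ∀ w ∈ W.direction, φ.linear w = 0 := by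
      intro w hw
      have hj₀W : x j₀ ∈ W := subset_affineSpan ℝ _ ⟨j₀, hj₀, rfl⟩
      have hmem : w +ᵥ x j₀ ∈ W := AffineSubspace.vadd_mem_of_mem_direction hw hj₀W
      have := φ.map_vadd (x j₀) w
      rw [hW0 _ hmem, hW0 _ hj₀W] at this
      simpa using this.symm
    set y : EuclideanSpace ℝ (Fin (m+1)) :=
      (EuclideanGeometry.orthogonalProjection W (x i) : EuclideanSpace ℝ (Fin (m+1))) with hy
    have hyW : y ∈ W := (EuclideanGeometry.orthogonalProjection W (x i)).2
    set d : EuclideanSpace ℝ (Fin (m+1)) := x i -ᵥ y with hd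
    have hdperp : d ∈ W.directionᗮ :=
      EuclideanGeometry.vsub_orthogonalProjection_mem_direction_orthogonal W (x i)
    have hLd : φ.linear d = 1 := by
      have h1 := φ.linearMap_vsub (x i) y
      rw [hφ i, hW0 _ hyW, if_pos rfl] at h1
      rw [hd, h1]
      simp [vsub_eq_sub]
    have hd0 : d ≠ 0 := by
      intro h; rw [h] at hLd; simp at hLd
    have hinf : Metric.infDist (x i) (W : Set (EuclideanSpace ℝ (Fin (m+1)))) = ‖d‖ := by
      apply le_antisymm
      · have := Metric.infDist_le_dist_of_mem (x := x i) hyW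
        rwa [dist_eq_norm_vsub (EuclideanSpace ℝ (Fin (m+1)))] at this
      · by_contra hlt
        push_neg at hlt
        obtain ⟨p, hp, hplt⟩ := (Metric.infDist_lt_iff ⟨y, hyW⟩).mp hlt
        have h2 := EuclideanGeometry.dist_sq_eq_dist_orthogonalProjection_sq_add_dist_orthogonalProjection_sq
          (s := W) (x i) hp
        have hdy : dist (x i)
            ((EuclideanGeometry.orthogonalProjection W (x i) : EuclideanSpace ℝ (Fin (m+1)))) = ‖d‖ := by
          rw [hd, ← hy, dist_eq_norm_vsub (EuclideanSpace ℝ (Fin (m+1)))]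
        rw [hdy] at h2
        have h3 : dist p (x i) = dist (x i) p := dist_comm _ _
        nlinarith [dist_nonneg (x := x i) (y := p), norm_nonneg d,
          dist_nonneg (x := p)
            (y := (EuclideanGeometry.orthogonalProjection W (x i) : EuclideanSpace ℝ (Fin (m+1))))]
    have hcard : Fintype.card {j : Fin (m + 2) // j ≠ i} = m + 1 := by
      simp [Fintype.card_subtype_compl]
    have hindep : AffineIndependent ℝ (x ∘ (Function.Embedding.subtype fun j => j ≠ i)) :=
      hx.comp_embedding (Function.Embedding.subtype _)
    have hrange : Set.range (x ∘ (Function.Embedding.subtype fun j => j ≠ i)) = x '' {j | j ≠ i} := by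
      rw [Set.range_comp, Function.Embedding.coe_subtype, Subtype.range_coe_subtype]
    have hdim : Module.finrank ℝ W.direction = m := by
      rw [hW, direction_affineSpan, ← hrange]
      exact hindep.finrank_vectorSpan hcard
    have hdimE : Module.finrank ℝ (EuclideanSpace ℝ (Fin (m+1))) = m + 1 := finrank_euclideanSpace_fin
    have hdimperp : Module.finrank ℝ W.directionᗮ = 1 := by
      have := Submodule.finrank_add_finrank_orthogonal (K := W.direction)
      omega
    have hspan : (ℝ ∙ d) = W.directionᗮ := by
      apply Submodule.eq_of_le_of_finrank_eq
      · rwa [Submodule.span_singleton_le_iff_mem]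
      · rw [finrank_span_singleton hd0, hdimperp]
    set u : EuclideanSpace ℝ (Fin (m+1)) :=
      (InnerProductSpace.toDual ℝ (EuclideanSpace ℝ (Fin (m+1)))).symm L with hu
    have hinner : ∀ v : EuclideanSpace ℝ (Fin (m+1)), ⟪u, v⟫ = L v := fun v =>
      InnerProductSpace.toDual_symm_apply
    have hnormu : ‖u‖ = ‖L‖ := LinearIsometryEquiv.norm_map _ _
    have huperp : u ∈ W.directionᗮ := by
      intro w hw
      rw [real_inner_comm, hinner w]
      exact hLdir w hw
    rw [← hspan, Submodule.mem_span_singleton] at huperp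
    obtain ⟨c, hc⟩ := huperp
    have hLdL : L d = 1 := hLd
    have hce : c * ‖d‖ ^ 2 = 1 := by
      have h4 := hinner d
      rw [hLdL, ← hc, inner_smul_left, real_inner_self_eq_norm_sq,
        starRingEnd_apply, star_trivial] at h4
      exact h4
    have hdn0 : ‖d‖ ≠ 0 := norm_ne_zero_iff.mpr hd0
    clear_value L u d
    have hdpos : (0:ℝ) < ‖d‖ := by positivity
    have hcval : c = 1 / ‖d‖ ^ 2 := by
      rw [eq_div_iff (by positivity)]
      linarith
    rw [← hnormu, ← hc, norm_smul, hcval, hinf]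
    rw [Real.norm_eq_abs, abs_of_pos (by positivity), one_div, one_div, pow_two,
      mul_inv, mul_assoc, inv_mul_cancel₀ hdn0, mul_one]

private theorem stmt0_deriv {n : ℕ} (φ : EuclideanSpace ℝ (Fin n) →ᵃ[ℝ] ℝ) (p : EuclideanSpace ℝ (Fin n)) :
    HasFDerivAt φ (LinearMap.toContinuousLinearMap φ.linear) p := by
  set L := LinearMap.toContinuousLinearMap φ.linear
  have hfe : ⇑φ = fun q => L q + (φ p - L p) := by
    funext q
    have h := φ.linearMap_vsub q p
    simp only [vsub_eq_sub, map_sub] at h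
    have h2 : L q - L p = φ q - φ p := by simpa [L] using h
    linarith [h2]
  rw [hfe]
  exact (L.hasFDerivAt).add_const _

/-- For affinely independent points `x 0, …, x n` in ℝⁿ and `φ` the `i`-th
hat function (the affine map with `φ (x j) = δᵢⱼ`), `φ` is differentiable with constant
derivative (its linear part), and the norm of its gradient equals `1 / eᵢ`, where
`eᵢ = dist (x i) (affineSpan {x j : j ≠ i})`. -/
theorem stmt0 {n : ℕ} (x : Fin (n + 1) → EuclideanSpace ℝ (Fin n))
    (hx : AffineIndependent ℝ x) (i : Fin (n + 1))
    (φ : EuclideanSpace ℝ (Fin n) →ᵃ[ℝ] ℝ)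
    (hφ : ∀ j, φ (x j) = if j = i then 1 else 0) :
    (∀ p, HasFDerivAt φ (LinearMap.toContinuousLinearMap φ.linear) p) ∧
      ‖LinearMap.toContinuousLinearMap φ.linear‖ =
        1 / Metric.infDist (x i) (affineSpan ℝ (x '' {j | j ≠ i}) : Set (EuclideanSpace ℝ (Fin n))) := by
  exact ⟨fun p => stmt0_deriv φ p, stmt0_norm x hx i φ hφ⟩
end

section
/- Let τ = conv{x₁, x₂, x₃} ⊆ ℝ² be a triangle with diameter h = diam τ, and let φᵢ be the i-th hat function of the triangle. Then ‖∇φᵢ‖ ≤ h / (2 · vol(τ)), where vol(τ) is the Lebesgue measure (area) of τ and ∇φᵢ is the constant gradient of φᵢ. -/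
open MeasureTheory Pointwise

set_option maxHeartbeats 1000000

/-- For a triangle `τ = conv {x 0, x 1, x 2} ⊆ ℝ²` with diameter `h = diam τ`
and `φ` the `i`-th hat function of the triangle, the (constant) gradient of `φ` satisfies
`‖∇φ‖ ≤ h / (2 · vol τ)`. -/
theorem stmt3 (x : Fin 3 → EuclideanSpace ℝ (Fin 2)) (hx : AffineIndependent ℝ x)
    (i : Fin 3) (φ : EuclideanSpace ℝ (Fin 2) →ᵃ[ℝ] ℝ)
    (hφ : ∀ j, φ (x j) = if j = i then 1 else 0) :
    ‖LinearMap.toContinuousLinearMap φ.linear‖ ≤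
      Metric.diam (convexHull ℝ (Set.range x)) /
        (2 * (volume (convexHull ℝ (Set.range x))).toReal) := by
  let E := EuclideanSpace ℝ (Fin 2)
  haveI : Fact (Module.finrank ℝ E = 2) := ⟨finrank_euclideanSpace_fin⟩
  set τ : Set E := convexHull ℝ (Set.range x) with hτ
  set a := x i
  set b := x (i + 1)
  set c := x (i + 2)
  set v := b - a with hv
  set w := c - a with hw
  set z := b - c with hz
  set f := φ.linear with hf
  have hφa : φ a = 1 := by simp [a, hφ]
  have hne1 : i + 1 ≠ i := by fin_cases i <;> decide
  have hne2 : i + 2 ≠ i := by fin_cases i <;> decide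
  have hne12 : i + 1 ≠ i + 2 := by fin_cases i <;> decide
  have hφb : φ b = 0 := by simp [b, hφ, hne1]
  have hφc : φ c = 0 := by simp [c, hφ, hne2]
  -- values of the linear part
  have hsub : ∀ p q : E, f (p - q) = φ p - φ q := fun p q => φ.linearMap_vsub p q
  have hfv : f v = -1 := by rw [hv, hsub, hφa, hφb]; ring
  have hfw : f w = -1 := by rw [hw, hsub, hφa, hφc]; ring
  have hfz : f z = 0 := by rw [hz, hsub, hφb, hφc]; ring
  have hzne : z ≠ 0 := sub_ne_zero.2 fun h => hne12 (hx.injective h)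
  -- orientation and area form
  set o : Orientation ℝ E (Fin 2) := Module.Basis.orientation (Module.finBasisOfFinrankEq ℝ E Fact.out) with ho
  set A : ℝ := |o.areaForm v z| with hA
  -- linear independence of v, z
  have hli : LinearIndependent ℝ ![v, z] := by
    rw [linearIndependent_fin2]
    refine ⟨by simpa using hzne, fun t ht => ?_⟩
    simp only [Matrix.cons_val_one, Matrix.head_cons, Matrix.cons_val_zero] at ht
    have h1 := congrArg f ht
    rw [LinearMap.map_smul, hfz, hfv, smul_eq_mul, mul_zero] at h1
    norm_num at h1
  set B : Module.Basis (Fin 2) ℝ E :=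
    basisOfLinearIndependentOfCardEqFinrank hli
      ((Fintype.card_fin 2).trans finrank_euclideanSpace_fin.symm) with hB
  -- key identity : areaForm p z = (-(areaForm v z)) * f p for all p
  have key : ∀ p : E, o.areaForm p z = (-(o.areaForm v z)) * f p := by
    have hgoal : ∀ m : Fin 2, (o.areaForm.flip z) (![v, z] m) =
        ((-(o.areaForm v z)) • f) (![v, z] m) := by
      intro m
      fin_cases m
      · show o.areaForm v z = (-(o.areaForm v z)) • (f v)
        rw [hfv, smul_eq_mul]; ring
      · show o.areaForm z z = (-(o.areaForm v z)) • (f z)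
        rw [Orientation.areaForm_apply_self, hfz, smul_zero]
    have : o.areaForm.flip z = (-(o.areaForm v z)) • f := by
      apply B.ext
      intro m
      rw [hB, coe_basisOfLinearIndependentOfCardEqFinrank]
      exact hgoal m
    intro p
    have := congrFun (congrArg (DFunLike.coe) this) p
    simpa [LinearMap.flip_apply] using this
  -- the parallelogram S
  set S : Set E := a +ᵥ parallelepiped ![v, w] with hS
  have hmemS : ∀ s t : ℝ, s ∈ Set.Icc (0:ℝ) 1 → t ∈ Set.Icc (0:ℝ) 1 →
      a + (s • v + t • w) ∈ S := by
    intro s t hs ht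
    refine Set.mem_vadd_set.2 ⟨s • v + t • w, ?_, by simp [vadd_eq_add, add_comm]⟩
    rw [mem_parallelepiped_iff]
    refine ⟨![s, t], ?_, by simp [Fin.sum_univ_two]⟩
    constructor <;> intro m <;> fin_cases m <;>
      simp [hs.1, hs.2, ht.1, ht.2, Pi.le_def]
  have hSconv : Convex ℝ S := (convex_parallelepiped ![v, w]).vadd a
  -- τ ⊆ S
  have hτS : τ ⊆ S := by
    apply convexHull_min _ hSconv
    rintro p ⟨m, rfl⟩
    have hm : m = i ∨ m = i + 1 ∨ m = i + 2 := by fin_cases i <;> fin_cases m <;> decide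
    rcases hm with rfl | rfl | rfl
    · have := hmemS 0 0 (by norm_num) (by norm_num); simpa using this
    · have := hmemS 1 0 (by norm_num) (by norm_num)
      simpa [hv] using this
    · have := hmemS 0 1 (by norm_num) (by norm_num)
      simpa [hw] using this
  -- reflection
  set m₀ : E := b + c with hm₀
  set ψ : E →ᵃ[ℝ] E := AffineMap.const ℝ E m₀ - AffineMap.id ℝ E with hψ
  have hψapp : ∀ p : E, ψ p = m₀ - p := fun p => rfl
  set τ' : Set E := ψ '' τ with hτ'
  have hτ'S : τ' ⊆ S := by
    rw [hτ', hτ, AffineMap.image_convexHull]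
    apply convexHull_min _ hSconv
    rintro p ⟨q, ⟨m, rfl⟩, rfl⟩
    have hm : m = i ∨ m = i + 1 ∨ m = i + 2 := by fin_cases i <;> fin_cases m <;> decide
    rcases hm with rfl | rfl | rfl
    · have := hmemS 1 1 (by norm_num) (by norm_num)
      rw [hψapp]
      have : m₀ - a = a + ((1:ℝ) • v + (1:ℝ) • w) := by
        simp only [one_smul, hv, hw, hm₀]; abel
      rw [this]
      exact hmemS 1 1 (by norm_num) (by norm_num)
    · rw [hψapp]
      have : m₀ - b = a + ((0:ℝ) • v + (1:ℝ) • w) := by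
        simp only [zero_smul, one_smul, hv, hw, hm₀]; abel
      rw [this]
      exact hmemS 0 1 (by norm_num) (by norm_num)
    · rw [hψapp]
      have : m₀ - c = a + ((1:ℝ) • v + (0:ℝ) • w) := by
        simp only [zero_smul, one_smul, hv, hw, hm₀]; abel
      rw [this]
      exact hmemS 1 0 (by norm_num) (by norm_num)
  -- compactness and measurability
  have hτcomp : IsCompact τ := (Set.finite_range x).isCompact_convexHull (𝕜 := ℝ)
  have hτ'comp : IsCompact τ' := hτcomp.image ψ.continuous_of_finiteDimensional
  have hτmeas : MeasurableSet τ := hτcomp.isClosed.measurableSet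
  have hτ'meas : MeasurableSet τ' := hτ'comp.isClosed.measurableSet
  -- τ' has same volume
  have hvolτ' : volume τ' = volume τ := by
    have himg : τ' = m₀ +ᵥ (-τ) := by
      ext p
      simp only [hτ', Set.mem_image, Set.mem_vadd_set, Set.mem_neg, vadd_eq_add]
      constructor
      · rintro ⟨q, hq, rfl⟩; exact ⟨-q, by rwa [neg_neg], by rw [hψapp]; abel⟩
      · rintro ⟨q, hq, rfl⟩; exact ⟨-q, by simpa using hq, by rw [hψapp]; abel⟩
    rw [himg, measure_vadd, Measure.measure_neg]
  -- intersection is in a hyperplane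
  have hker : LinearMap.ker f ≠ ⊤ := by
    intro h
    have : f v = 0 := by
      have : v ∈ LinearMap.ker f := by rw [h]; trivial
      simpa using this
    rw [hfv] at this; norm_num at this
  have hφnonneg : ∀ p ∈ τ, 0 ≤ φ p := by
    intro p hp
    have : τ ⊆ φ ⁻¹' Set.Ici 0 := by
      apply convexHull_min _ ((convex_Ici (0:ℝ)).affine_preimage φ)
      rintro q ⟨m, rfl⟩
      simp only [Set.mem_preimage, Set.mem_Ici, hφ]
      split <;> norm_num
    exact this hp
  have hinter : volume (τ ∩ τ') = 0 := by
    have hsub2 : τ ∩ τ' ⊆ b +ᵥ (LinearMap.ker f : Set E) := by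
      rintro p ⟨hp1, hp2⟩
      have h1 : 0 ≤ φ p := hφnonneg p hp1
      obtain ⟨q, hq, rfl⟩ := hp2
      have h2 : φ (ψ q) = -φ q := by
        rw [hψapp]
        have : φ (m₀ - q) - φ c = f ((m₀ - q) - c) := (hsub _ _).symm
        have h3 : (m₀ - q) - c = b - q := by rw [hm₀]; abel
        rw [h3, hsub, hφb] at this
        rw [hφc] at this
        linarith
      have h4 : φ (ψ q) = 0 := le_antisymm (by rw [h2]; linarith [hφnonneg q hq]) h1
      refine Set.mem_vadd_set.2 ⟨ψ q - b, ?_, by simp⟩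
      simp only [SetLike.mem_coe, LinearMap.mem_ker]
      rw [hsub, h4, hφb, sub_zero]
    refine measure_mono_null hsub2 ?_
    rw [measure_vadd]
    exact Measure.addHaar_submodule volume _ hker
  -- volume of the parallelogram
  have hvolS : volume S = ENNReal.ofReal |o.volumeForm ![v, w]| := by
    rw [hS, measure_vadd, ← o.measure_eq_volume, AlternatingMap.measure_parallelepiped]
  -- area form comparison
  have hAvw : |o.areaForm v w| = A := by
    rw [hA, hz]
    have : o.areaForm v (b - c) = o.areaForm v v - o.areaForm v w := by
      have hbc : b - c = v - w := by rw [hv, hw]; abel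
      rw [hbc, map_sub]
    rw [this, Orientation.areaForm_apply_self, zero_sub, abs_neg]
  -- the volume bound : 2 * vol τ ≤ A
  set V : ℝ := (volume τ).toReal with hV
  have hτfin : volume τ ≠ ⊤ := hτcomp.measure_lt_top.ne
  have hVpos : 0 < V := by
    rw [hV, ENNReal.toReal_pos_iff]
    refine ⟨?_, hτfin.lt_top⟩
    apply MeasureTheory.Measure.measure_pos_of_nonempty_interior
    rw [hτ, interior_convexHull_nonempty_iff_affineSpan_eq_top,
      hx.affineSpan_eq_top_iff_card_eq_finrank_add_one]
    simp [finrank_euclideanSpace_fin]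
  have h2V : 2 * V ≤ A := by
    have hsum : volume τ + volume τ' = volume (τ ∪ τ') + volume (τ ∩ τ') :=
      (measure_union_add_inter τ hτ'meas).symm
    have hUS : volume (τ ∪ τ') ≤ volume S :=
      measure_mono (Set.union_subset hτS hτ'S)
    have h2 : volume τ + volume τ' ≤ ENNReal.ofReal A := by
      rw [hsum, hinter, add_zero]
      refine hUS.trans ?_
      rw [hvolS, ← hAvw, Orientation.areaForm_to_volumeForm]
    rw [hvolτ'] at h2
    have h3 : volume τ + volume τ = ENNReal.ofReal (2 * V) := by
      rw [hV, two_mul, ENNReal.ofReal_add ENNReal.toReal_nonneg ENNReal.toReal_nonneg,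
        ENNReal.ofReal_toReal hτfin]
    rw [h3] at h2
    exact (ENNReal.ofReal_le_ofReal_iff (abs_nonneg _)).1 h2
  have hApos : 0 < A := lt_of_lt_of_le (by linarith) h2V
  -- operator norm bound
  have hnorm : ‖LinearMap.toContinuousLinearMap φ.linear‖ ≤ ‖z‖ / A := by
    apply ContinuousLinearMap.opNorm_le_bound
    · positivity
    intro p
    have h1 : |f p| * A = |o.areaForm p z| := by
      rw [key p, abs_mul, abs_neg, hA, mul_comm]
    have h2 : |o.areaForm p z| ≤ ‖p‖ * ‖z‖ := o.abs_areaForm_le p z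
    have h3 : |f p| * A ≤ ‖p‖ * ‖z‖ := h1 ▸ h2
    have : |f p| ≤ ‖z‖ / A * ‖p‖ := by
      rw [div_mul_eq_mul_div, le_div_iff₀ hApos]
      calc |f p| * A ≤ ‖p‖ * ‖z‖ := h3
        _ = ‖z‖ * ‖p‖ := by ring
    simpa [LinearMap.coe_toContinuousLinearMap', Real.norm_eq_abs] using this
  refine hnorm.trans ?_
  -- z has length ≤ diam
  have hzdiam : ‖z‖ ≤ Metric.diam τ := by
    have hbmem : b ∈ τ := subset_convexHull ℝ _ ⟨i + 1, rfl⟩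
    have hcmem : c ∈ τ := subset_convexHull ℝ _ ⟨i + 2, rfl⟩
    have := Metric.dist_le_diam_of_mem hτcomp.isBounded hbmem hcmem
    rwa [dist_eq_norm] at this
  exact div_le_div₀ Metric.diam_nonneg hzdiam (by linarith) h2V
end

section
/- Let τ = conv{x₁, x₂, x₃} ⊆ ℝ² be a triangle with diameter h = diam τ, and suppose the shape regularity condition holds: there exist c ∈ ℝ² and r > 0 with closedBall(c, r) ⊆ τ and h ≤ 2rD for some constant D ≥ 1. Then for each i, the H¹ seminorm of the i-th hat function satisfies ∫_τ ‖∇φᵢ(x)‖² dx ≤ D / 2. -/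
open MeasureTheory

namespace Stmt4Aux

noncomputable def ee (m : Fin 2) : EuclideanSpace ℝ (Fin 2) := EuclideanSpace.single m 1

theorem fderiv_affine (φ : EuclideanSpace ℝ (Fin 2) →ᵃ[ℝ] ℝ) (y : EuclideanSpace ℝ (Fin 2)) :
    fderiv ℝ φ y = LinearMap.toContinuousLinearMap φ.linear := by
  have h : HasFDerivAt φ (LinearMap.toContinuousLinearMap φ.linear) y := by
    have hd : (φ : EuclideanSpace ℝ (Fin 2) → ℝ)
        = fun z => (LinearMap.toContinuousLinearMap φ.linear) z + φ 0 := by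
      conv_lhs => rw [φ.decomp]
      funext z; simp
    rw [hd]
    exact ((LinearMap.toContinuousLinearMap φ.linear).hasFDerivAt).add_const _
  exact h.fderiv

theorem volA : (volume {q : ℝ × ℝ | 0 ≤ q.1 ∧ 0 ≤ q.2 ∧ q.1 + q.2 ≤ 1}) = ENNReal.ofReal (1/2) := by
  have hmeas : MeasurableSet {q : ℝ × ℝ | 0 ≤ q.1 ∧ 0 ≤ q.2 ∧ q.1 + q.2 ≤ 1} := by
    apply MeasurableSet.inter
    · exact measurableSet_le measurable_const measurable_fst
    apply MeasurableSet.inter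
    · exact measurableSet_le measurable_const measurable_snd
    · exact measurableSet_le (measurable_fst.add measurable_snd) measurable_const
  have : (volume : Measure (ℝ × ℝ)) = (volume : Measure ℝ).prod volume := rfl
  rw [this, Measure.prod_apply hmeas]
  have hslice : ∀ a : ℝ, volume (Prod.mk a ⁻¹' {q : ℝ × ℝ | 0 ≤ q.1 ∧ 0 ≤ q.2 ∧ q.1 + q.2 ≤ 1})
      = Set.indicator (Set.Icc (0:ℝ) 1) (fun a => ENNReal.ofReal (1 - a)) a := by
    intro a
    by_cases ha : 0 ≤ a
    · have : Prod.mk a ⁻¹' {q : ℝ × ℝ | 0 ≤ q.1 ∧ 0 ≤ q.2 ∧ q.1 + q.2 ≤ 1} = Set.Icc 0 (1 - a) := by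
        ext b; simp only [Set.mem_preimage, Set.mem_setOf_eq, Set.mem_Icc]
        constructor
        · rintro ⟨_, h2, h3⟩; exact ⟨h2, by linarith⟩
        · rintro ⟨h2, h3⟩; exact ⟨ha, h2, by linarith⟩
      rw [this, Real.volume_Icc]
      by_cases ha1 : a ≤ 1
      · rw [Set.indicator_of_mem (Set.mem_Icc.2 ⟨ha, ha1⟩)]; ring_nf
      · rw [Set.indicator_of_notMem (by simp [Set.mem_Icc]; intro; linarith)]
        rw [ENNReal.ofReal_eq_zero.2 (by linarith)]
    · have : Prod.mk a ⁻¹' {q : ℝ × ℝ | 0 ≤ q.1 ∧ 0 ≤ q.2 ∧ q.1 + q.2 ≤ 1} = ∅ := by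
        ext b; simp only [Set.mem_preimage, Set.mem_setOf_eq, Set.mem_empty_iff_false]
        exact iff_false_intro (fun h => ha h.1)
      rw [this, measure_empty, Set.indicator_of_notMem (by simp [Set.mem_Icc]; intro; linarith)]
  simp_rw [hslice]
  rw [lintegral_indicator measurableSet_Icc]
  rw [← ofReal_integral_eq_lintegral_ofReal]
  · congr 1
    rw [integral_Icc_eq_integral_Ioc, ← intervalIntegral.integral_of_le (by norm_num : (0:ℝ) ≤ 1)]
    have h1 : IntervalIntegrable (fun x : ℝ => x) volume 0 1 := continuous_id.intervalIntegrable _ _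
    rw [intervalIntegral.integral_sub intervalIntegrable_const h1]
    norm_num [integral_id]
  · exact (continuous_const.sub continuous_id).integrableOn_Icc
  · filter_upwards [self_mem_ae_restrict measurableSet_Icc] with a ha
    have := (Set.mem_Icc.1 ha).2
    simp only [Pi.zero_apply]
    linarith

theorem volS : volume {y : EuclideanSpace ℝ (Fin 2) | 0 ≤ y 0 ∧ 0 ≤ y 1 ∧ y 0 + y 1 ≤ 1}
    = ENNReal.ofReal (1/2) := by
  have h1 := EuclideanSpace.volume_preserving_symm_measurableEquiv_toLp (Fin 2)
  have h2 := volume_preserving_finTwoArrow ℝ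
  have h := h2.comp h1
  have hmeas : MeasurableSet {q : ℝ × ℝ | 0 ≤ q.1 ∧ 0 ≤ q.2 ∧ q.1 + q.2 ≤ 1} := by
    apply MeasurableSet.inter
    · exact measurableSet_le measurable_const measurable_fst
    apply MeasurableSet.inter
    · exact measurableSet_le measurable_const measurable_snd
    · exact measurableSet_le (measurable_fst.add measurable_snd) measurable_const
  have hpre : ((MeasurableEquiv.toLp 2 (Fin 2 → ℝ)).symm.trans MeasurableEquiv.finTwoArrow) ⁻¹'
      {q : ℝ × ℝ | 0 ≤ q.1 ∧ 0 ≤ q.2 ∧ q.1 + q.2 ≤ 1}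
      = {y : EuclideanSpace ℝ (Fin 2) | 0 ≤ y 0 ∧ 0 ≤ y 1 ∧ y 0 + y 1 ≤ 1} := rfl
  rw [← volA, ← hpre]
  exact h.measure_preimage hmeas.nullMeasurableSet

theorem hull_eq : convexHull ℝ {(0:EuclideanSpace ℝ (Fin 2)), ee 0, ee 1}
    = {y : EuclideanSpace ℝ (Fin 2) | 0 ≤ y 0 ∧ 0 ≤ y 1 ∧ y 0 + y 1 ≤ 1} := by
  apply le_antisymm
  · apply convexHull_min
    · rintro y (rfl | rfl | rfl) <;>
        simp [ee, EuclideanSpace.single_apply]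
    · intro p hp q hq a b ha hb hab
      obtain ⟨hp0, hp1, hp2⟩ := hp
      obtain ⟨hq0, hq1, hq2⟩ := hq
      refine ⟨?_, ?_, ?_⟩ <;> simp only [PiLp.add_apply, PiLp.smul_apply, smul_eq_mul] <;> nlinarith
  · intro p hp
    obtain ⟨hp0, hp1, hp2⟩ := hp
    have hc := convex_convexHull ℝ ({(0:EuclideanSpace ℝ (Fin 2)), ee 0, ee 1} :
      Set (EuclideanSpace ℝ (Fin 2)))
    have hmem : ∀ m : Fin 3, (![0, ee 0, ee 1] m) ∈
        convexHull ℝ ({(0:EuclideanSpace ℝ (Fin 2)), ee 0, ee 1} :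
          Set (EuclideanSpace ℝ (Fin 2))) := by
      intro m
      apply subset_convexHull
      fin_cases m <;> simp
    have := hc.sum_mem (t := Finset.univ) (w := ![1 - p 0 - p 1, p 0, p 1])
      (z := ![0, ee 0, ee 1])
      (fun m _ => by fin_cases m <;> simp <;> linarith)
      (by simp [Fin.sum_univ_three]; ring)
      (fun m _ => hmem m)
    convert this using 1
    ext m
    fin_cases m <;>
      simp [Fin.sum_univ_three, ee, EuclideanSpace.single_apply, PiLp.add_apply, PiLp.smul_apply]

theorem volTri (v w : EuclideanSpace ℝ (Fin 2)) :
    volume (convexHull ℝ {(0:EuclideanSpace ℝ (Fin 2)), v, w})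
      = ENNReal.ofReal (|v 0 * w 1 - v 1 * w 0| / 2) := by
  set b := (EuclideanSpace.basisFun (Fin 2) ℝ).toBasis with hb
  set T : EuclideanSpace ℝ (Fin 2) →ₗ[ℝ] EuclideanSpace ℝ (Fin 2) :=
    Matrix.toLin b b !![v 0, w 0; v 1, w 1] with hT
  have hdet : LinearMap.det T = v 0 * w 1 - v 1 * w 0 := by
    rw [hT, LinearMap.det_toLin, Matrix.det_fin_two]
    simp; ring
  have hTv : T (ee 0) = v := by
    have h0 : ee 0 = b 0 := by
      simp [hb, ee, EuclideanSpace.basisFun_apply]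
    rw [h0, hT, Matrix.toLin_self]
    ext m
    fin_cases m <;>
      simp [Fin.sum_univ_two, hb, ee, EuclideanSpace.basisFun_apply, EuclideanSpace.single_apply,
        PiLp.add_apply, PiLp.smul_apply]
  have hTw : T (ee 1) = w := by
    have h1 : ee 1 = b 1 := by
      simp [hb, ee, EuclideanSpace.basisFun_apply]
    rw [h1, hT, Matrix.toLin_self]
    ext m
    fin_cases m <;>
      simp [Fin.sum_univ_two, hb, ee, EuclideanSpace.basisFun_apply, EuclideanSpace.single_apply,
        PiLp.add_apply, PiLp.smul_apply]
  have himg : T '' (convexHull ℝ {(0:EuclideanSpace ℝ (Fin 2)), ee 0, ee 1})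
      = convexHull ℝ {(0:EuclideanSpace ℝ (Fin 2)), v, w} := by
    rw [T.image_convexHull]
    congr 1
    rw [Set.image_insert_eq, Set.image_insert_eq, Set.image_singleton, map_zero, hTv, hTw]
  rw [← himg, Measure.addHaar_image_linearMap, hull_eq, volS, hdet,
    ← ENNReal.ofReal_mul (abs_nonneg _), mul_one_div]

end Stmt4Aux


open Stmt4Aux Pointwise in
set_option maxHeartbeats 1000000 in
/-- Let `τ = conv {x 0, x 1, x 2} ⊆ ℝ²` be a triangle with diameter
`h = diam τ` satisfying the shape regularity condition (it contains a closed ball of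
radius `r > 0` with `h ≤ 2 r D`, `D ≥ 1`).  Then the squared H¹ seminorm of each hat
function `φ` satisfies `∫_τ ‖∇φ‖² dx ≤ D / 2`. -/
theorem stmt4 (x : Fin 3 → EuclideanSpace ℝ (Fin 2)) (hx : AffineIndependent ℝ x)
    (c : EuclideanSpace ℝ (Fin 2)) (r D : ℝ) (hr : 0 < r) (hD : 1 ≤ D)
    (hball : Metric.closedBall c r ⊆ convexHull ℝ (Set.range x))
    (hreg : Metric.diam (convexHull ℝ (Set.range x)) ≤ 2 * r * D)
    (i : Fin 3) (φ : EuclideanSpace ℝ (Fin 2) →ᵃ[ℝ] ℝ)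
    (hφ : ∀ j, φ (x j) = if j = i then 1 else 0) :
    ∫ y in convexHull ℝ (Set.range x), ‖fderiv ℝ φ y‖ ^ 2 ≤ D / 2 := by
  classical
  set τ := convexHull ℝ (Set.range x) with hτ
  set Lc := LinearMap.toContinuousLinearMap φ.linear with hLc
  -- the integral is constant
  have hint : ∫ y in τ, ‖fderiv ℝ φ y‖ ^ 2 = (volume τ).toReal * ‖Lc‖ ^ 2 := by
    simp only [fderiv_affine, ← hLc]
    rw [setIntegral_const, smul_eq_mul]
    rfl
  -- indices
  have hidx : ∀ i' : Fin 3, i' + 1 ≠ i' ∧ i' + 2 ≠ i' ∧ i' + 1 ≠ i' + 2 := by decide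
  set j := i + 1 with hj
  set k := i + 2 with hk
  have hji : j ≠ i := (hidx i).1
  have hki : k ≠ i := (hidx i).2.1
  have hφi : φ (x i) = 1 := by rw [hφ i, if_pos rfl]
  have hφj : φ (x j) = 0 := by rw [hφ j, if_neg hji]
  have hφk : φ (x k) = 0 := by rw [hφ k, if_neg hki]
  -- edge vectors
  set v : EuclideanSpace ℝ (Fin 2) := x i - x k with hv
  set w : EuclideanSpace ℝ (Fin 2) := x j - x k with hw
  have hLv : Lc v = 1 := by
    have := φ.linearMap_vsub (x i) (x k)
    simp only [vsub_eq_sub] at this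
    simp [hLc, hv, this, hφi, hφk]
  have hLw : Lc w = 0 := by
    have := φ.linearMap_vsub (x j) (x k)
    simp only [vsub_eq_sub] at this
    simp [hLc, hw, this, hφj, hφk]
  -- range as a triple
  have hall : ∀ i' m : Fin 3, m = i' ∨ m = i' + 1 ∨ m = i' + 2 := by decide
  have hrange : Set.range x = {x k, x i, x j} := by
    ext z
    constructor
    · rintro ⟨m, rfl⟩
      rcases hall i m with rfl | rfl | rfl
      · exact Or.inr (Or.inl rfl)
      · exact Or.inr (Or.inr rfl)
      · exact Or.inl rfl
    · rintro (rfl | rfl | rfl) <;> exact ⟨_, rfl⟩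
  -- volume of the triangle
  have hvadd : τ = (x k) +ᵥ convexHull ℝ {(0:EuclideanSpace ℝ (Fin 2)), v, w} := by
    rw [hτ, hrange, ← convexHull_vadd]
    congr 1
    have e1 : x k + (0 : EuclideanSpace ℝ (Fin 2)) = x k := add_zero _
    have e2 : x k + v = x i := by rw [hv]; abel
    have e3 : x k + w = x j := by rw [hw]; abel
    simp only [Set.vadd_set_insert, Set.vadd_set_singleton, vadd_eq_add, e1, e2, e3]
  have hvol : volume τ = ENNReal.ofReal (|v 0 * w 1 - v 1 * w 0| / 2) := by
    rw [hvadd, measure_vadd, volTri]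
  -- gradient components
  set g0 := Lc (ee 0) with hg0
  set g1 := Lc (ee 1) with hg1
  have hyrep : ∀ y : EuclideanSpace ℝ (Fin 2), y = y 0 • ee 0 + y 1 • ee 1 := by
    intro y
    ext m
    fin_cases m <;>
      simp [ee, EuclideanSpace.single_apply, PiLp.add_apply, PiLp.smul_apply]
  have hexp : ∀ y : EuclideanSpace ℝ (Fin 2), Lc y = g0 * y 0 + g1 * y 1 := by
    intro y
    conv_lhs => rw [hyrep y]
    rw [map_add, Lc.map_smul, Lc.map_smul, smul_eq_mul, smul_eq_mul, mul_comm (y 0), mul_comm (y 1)]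
  have hP : g0 * v 0 + g1 * v 1 = 1 := by rw [← hexp v, hLv]
  have hR : g0 * w 0 + g1 * w 1 = 0 := by rw [← hexp w, hLw]
  set d := v 0 * w 1 - v 1 * w 0 with hd
  have h3 : g0 * d = w 1 := by linear_combination w 1 * hP - v 1 * hR
  have h4 : g1 * d = -(w 0) := by linear_combination -(w 0 * hP) + v 0 * hR
  have h5 : (g0 ^ 2 + g1 ^ 2) * d ^ 2 = w 0 ^ 2 + w 1 ^ 2 := by
    linear_combination (g0 * d + w 1) * h3 + (g1 * d - w 0) * h4
  -- Cauchy–Schwarz bound on operator norm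
  have hnorm_eq : ∀ y : EuclideanSpace ℝ (Fin 2), ‖y‖ = Real.sqrt (y 0 ^ 2 + y 1 ^ 2) := by
    intro y
    rw [EuclideanSpace.norm_eq]
    congr 1
    simp [Fin.sum_univ_two, Real.norm_eq_abs, sq_abs]
  have hcs : ‖Lc‖ ≤ Real.sqrt (g0 ^ 2 + g1 ^ 2) := by
    apply ContinuousLinearMap.opNorm_le_bound _ (Real.sqrt_nonneg _)
    intro y
    rw [hexp y, hnorm_eq y, Real.norm_eq_abs, ← Real.sqrt_mul (by positivity), ← Real.sqrt_sq_eq_abs]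
    apply Real.sqrt_le_sqrt
    nlinarith [sq_nonneg (g0 * y 1 - g1 * y 0)]
  -- φ maps τ into [0, 1]
  have hφrange : ∀ y ∈ τ, φ y ∈ Set.Icc (0:ℝ) 1 := by
    intro y hy
    have h1 : φ y ∈ φ '' τ := ⟨y, hy, rfl⟩
    rw [hτ, AffineMap.image_convexHull] at h1
    have hsub : φ '' Set.range x ⊆ Set.Icc (0:ℝ) 1 := by
      rintro z ⟨z', ⟨m, rfl⟩, rfl⟩
      rw [hφ m]
      split <;> norm_num
    exact convexHull_min hsub (convex_Icc 0 1) h1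
  -- operator norm bound from the inscribed ball
  have hopb : ‖Lc‖ ≤ 1 / (2 * r) := by
    apply ContinuousLinearMap.opNorm_le_bound _ (by positivity)
    intro y
    rcases eq_or_ne y 0 with rfl | hy
    · simp
    · have hyn : 0 < ‖y‖ := norm_pos_iff.2 hy
      set u := (r / ‖y‖) • y with hu
      have hun : ‖u‖ = r := by
        rw [hu, norm_smul, Real.norm_eq_abs, abs_of_pos (div_pos hr hyn),
          div_mul_cancel₀ _ (ne_of_gt hyn)]
      have h1 : c + u ∈ τ := by
        apply hball
        rw [Metric.mem_closedBall, dist_eq_norm]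
        simp [hun]
      have h2 : c - u ∈ τ := by
        apply hball
        rw [Metric.mem_closedBall, dist_eq_norm]
        simp [norm_sub_rev, hun]
      obtain ⟨ha1, ha2⟩ := hφrange _ h1
      obtain ⟨hb1, hb2⟩ := hφrange _ h2
      have hdiff : Lc (u + u) = φ (c + u) - φ (c - u) := by
        have := φ.linearMap_vsub (c + u) (c - u)
        simp only [vsub_eq_sub] at this
        rw [show c + u - (c - u) = u + u by abel] at this
        simpa [hLc] using this
      have hLu : |Lc u| ≤ 1 / 2 := by
        rw [map_add] at hdiff
        rw [abs_le]
        constructor <;> linarith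
      have hyu : Lc y = (‖y‖ / r) * Lc u := by
        rw [hu, Lc.map_smul, smul_eq_mul]
        field_simp
      rw [Real.norm_eq_abs, hyu, abs_mul, abs_of_pos (div_pos hyn hr)]
      calc ‖y‖ / r * |Lc u| ≤ ‖y‖ / r * (1 / 2) := by
            apply mul_le_mul_of_nonneg_left hLu (le_of_lt (div_pos hyn hr))
        _ = 1 / (2 * r) * ‖y‖ := by ring
  -- length of the opposite edge
  have hwd : ‖w‖ ≤ 2 * r * D := by
    have hbd : Bornology.IsBounded τ := ((Set.finite_range x).isCompact_convexHull ℝ).isBounded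
    have hjm : x j ∈ τ := subset_convexHull ℝ _ ⟨j, rfl⟩
    have hkm : x k ∈ τ := subset_convexHull ℝ _ ⟨k, rfl⟩
    have := Metric.dist_le_diam_of_mem hbd hjm hkm
    rw [dist_eq_norm] at this
    exact le_trans this hreg
  -- put everything together
  have hGd : Real.sqrt (g0 ^ 2 + g1 ^ 2) * |d| = ‖w‖ := by
    rw [hnorm_eq w, ← h5, Real.sqrt_mul (by positivity), Real.sqrt_sq_eq_abs]
  rw [hint, hvol, ENNReal.toReal_ofReal (by positivity)]
  have hN : (0:ℝ) ≤ ‖Lc‖ := norm_nonneg _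
  have habs : (0:ℝ) ≤ |d| := abs_nonneg _
  have key : ‖Lc‖ ^ 2 * |d| ≤ D := by
    calc ‖Lc‖ ^ 2 * |d| = ‖Lc‖ * (‖Lc‖ * |d|) := by ring
      _ ≤ ‖Lc‖ * (Real.sqrt (g0 ^ 2 + g1 ^ 2) * |d|) := by
          apply mul_le_mul_of_nonneg_left (mul_le_mul_of_nonneg_right hcs habs) hN
      _ = ‖Lc‖ * ‖w‖ := by rw [hGd]
      _ ≤ (1 / (2 * r)) * (2 * r * D) := by
          apply mul_le_mul hopb hwd (norm_nonneg _) (by positivity)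
      _ = D := by field_simp
  nlinarith [key]
end

section
/- Let 0 < θ and let x ∈ ℝ². Suppose τ₁, …, τ_N are triangles in ℝ² (τ_k = conv{x, y_k, z_k} with x, y_k, z_k affinely independent) that all have x as a vertex, have pairwise disjoint interiors, and whose inner angle at x satisfies ∠(y_k, x, z_k) ≥ θ for every k. Then N ≤ 2π/θ; in particular N ≤ ⌊2π/θ⌋. -/
open Real

noncomputable section

def scone (u v : ℂ) : Set ℂ := {c | ∃ α β : ℝ, 0 < α ∧ 0 < β ∧ c = α • u + β • v}

lemma scone_preimage (M : ℂ ≃ₗᵢ[ℝ] ℂ) (u v : ℂ) :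
    ⇑M ⁻¹' scone (M u) (M v) = scone u v := by
  ext c
  constructor
  · rintro ⟨α, β, hα, hβ, h⟩
    refine ⟨α, β, hα, hβ, M.injective ?_⟩
    rw [h, map_add, LinearIsometryEquiv.map_smul, LinearIsometryEquiv.map_smul]
  · rintro ⟨α, β, hα, hβ, h⟩
    refine ⟨α, β, hα, hβ, ?_⟩
    rw [h, map_add, LinearIsometryEquiv.map_smul, LinearIsometryEquiv.map_smul]

lemma scone_smul {a b : ℝ} (ha : 0 < a) (hb : 0 < b) (u v : ℂ) :
    scone (a • u) (b • v) = scone u v := by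
  ext c
  constructor
  · rintro ⟨α, β, hα, hβ, h⟩
    exact ⟨α * a, β * b, by positivity, by positivity, by rw [h, smul_smul, smul_smul]⟩
  · rintro ⟨α, β, hα, hβ, h⟩
    exact ⟨α / a, β / b, by positivity, by positivity, by
      rw [h, smul_smul, smul_smul, div_mul_cancel₀ _ ha.ne', div_mul_cancel₀ _ hb.ne']⟩

section conebasis

variable {u v : ℂ} (li : LinearIndependent ℝ ![u, v])

lemma card_eq_finrank_complex : Fintype.card (Fin 2) = Module.finrank ℝ ℂ := by
  simp [Complex.finrank_real_complex]

lemma basis_repr_combo (α β : ℝ) :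
    (basisOfLinearIndependentOfCardEqFinrank li card_eq_finrank_complex).equivFun
      (α • u + β • v) = fun i => ![α, β] i := by
  set B := basisOfLinearIndependentOfCardEqFinrank li card_eq_finrank_complex with hB
  have hB0 : B 0 = u := by rw [hB, coe_basisOfLinearIndependentOfCardEqFinrank]; rfl
  have hB1 : B 1 = v := by rw [hB, coe_basisOfLinearIndependentOfCardEqFinrank]; rfl
  funext i
  rw [← hB0, ← hB1, map_add, LinearEquiv.map_smul, LinearEquiv.map_smul]
  simp only [Pi.add_apply, Pi.smul_apply, Module.Basis.equivFun_self, smul_eq_mul]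
  fin_cases i <;> norm_num

lemma scone_eq_preimage :
    scone u v = (fun c =>
      ((basisOfLinearIndependentOfCardEqFinrank li card_eq_finrank_complex).equivFunL c 0,
       (basisOfLinearIndependentOfCardEqFinrank li card_eq_finrank_complex).equivFunL c 1)) ⁻¹'
      (Set.Ioi 0 ×ˢ Set.Ioi 0) := by
  set B := basisOfLinearIndependentOfCardEqFinrank li card_eq_finrank_complex with hB
  have hB0 : B 0 = u := by rw [hB, coe_basisOfLinearIndependentOfCardEqFinrank]; rfl
  have hB1 : B 1 = v := by rw [hB, coe_basisOfLinearIndependentOfCardEqFinrank]; rfl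
  have hcoe : ∀ c, B.equivFunL c = B.equivFun c := fun _ => rfl
  ext c
  constructor
  · rintro ⟨α, β, hα, hβ, rfl⟩
    have h2 := basis_repr_combo li α β
    constructor
    · show (0:ℝ) < B.equivFunL _ 0
      rw [hcoe, hB, h2]; simpa using hα
    · show (0:ℝ) < B.equivFunL _ 1
      rw [hcoe, hB, h2]; simpa using hβ
  · rintro ⟨h0, h1⟩
    refine ⟨B.equivFun c 0, B.equivFun c 1, h0, h1, ?_⟩
    conv_lhs => rw [← B.equivFun.symm_apply_apply c]
    rw [B.equivFun_symm_apply, Fin.sum_univ_two, hB0, hB1]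

include li in
lemma isOpen_scone : IsOpen (scone u v) := by
  rw [scone_eq_preimage li]
  set B := basisOfLinearIndependentOfCardEqFinrank li card_eq_finrank_complex
  exact (isOpen_Ioi.prod isOpen_Ioi).preimage
    (((continuous_apply (0 : Fin 2)).comp B.equivFunL.continuous).prodMk
     ((continuous_apply (1 : Fin 2)).comp B.equivFunL.continuous))

end conebasis

end
noncomputable section
open Real MeasureTheory Set Metric

lemma sector_eq {t r : ℝ} (ht0 : 0 < t) (htπ : t < π) (hr : 0 < r) :
    scone 1 (Complex.exp (t * Complex.I)) ∩ ball 0 r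
      = Complex.polarCoord.symm '' (Ioo 0 r ×ˢ Ioo 0 t) := by
  have hsint : 0 < Real.sin t := Real.sin_pos_of_pos_of_lt_pi ht0 htπ
  have he : Complex.exp (t * Complex.I)
      = Complex.ofReal (Real.cos t) + Complex.ofReal (Real.sin t) * Complex.I := by
    rw [Complex.exp_mul_I, Complex.ofReal_cos, Complex.ofReal_sin]
  ext c
  constructor
  · rintro ⟨⟨α, β, hα, hβ, rfl⟩, hball⟩
    set c : ℂ := α • 1 + β • Complex.exp (t * Complex.I) with hc
    have hcre : c.re = α + β * Real.cos t := by
      rw [hc, he, Complex.real_smul, Complex.real_smul]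
      simp only [Complex.add_re, Complex.mul_re, Complex.add_im, Complex.mul_im,
        Complex.ofReal_re, Complex.ofReal_im, Complex.I_re, Complex.I_im,
        Complex.one_re, Complex.one_im]
      ring
    have hcim : c.im = β * Real.sin t := by
      rw [hc, he, Complex.real_smul, Complex.real_smul]
      simp only [Complex.add_re, Complex.mul_re, Complex.add_im, Complex.mul_im,
        Complex.ofReal_re, Complex.ofReal_im, Complex.I_re, Complex.I_im,
        Complex.one_re, Complex.one_im]
      ring
    have hc0 : c ≠ 0 := by
      intro h
      rw [h] at hcim
      simp only [Complex.zero_im] at hcim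
      nlinarith
    set ρ := ‖c‖ with hρ
    set φ := Complex.arg c with hφ
    have hρ0 : 0 < ρ := norm_pos_iff.mpr hc0
    have hρr : ρ < r := by
      rw [mem_ball_zero_iff] at hball
      exact hball
    have him : 0 < c.im := by rw [hcim]; positivity
    have hφ0 : 0 < φ := by
      rcases lt_or_eq_of_le (Complex.arg_nonneg_iff.2 him.le) with h | h
      · exact h
      · exfalso
        have := Complex.arg_eq_zero_iff.1 h.symm
        exact him.ne' this.2
    have hre2 : c.re = ρ * Real.cos φ := by
      rw [hφ, Complex.cos_arg hc0, hρ]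
      field_simp
    have him2 : c.im = ρ * Real.sin φ := by
      rw [hφ, Complex.sin_arg, hρ]
      field_simp
    have hφπ : φ < π := by
      rcases lt_or_eq_of_le (Complex.arg_le_pi c) with h | h
      · exact h
      · exfalso
        have := Complex.arg_eq_pi_iff.1 h
        exact him.ne' this.2
    have hφt : φ < t := by
      by_contra hle
      push_neg at hle
      have hkey : ρ * Real.sin (φ - t) = -(α * Real.sin t) := by
        rw [Real.sin_sub]
        have e1 : β * Real.sin t = ρ * Real.sin φ := by rw [← hcim, him2]
        have e2 : α + β * Real.cos t = ρ * Real.cos φ := by rw [← hcre, hre2]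
        linear_combination Real.sin t * e2 - Real.cos t * e1
      have hnn : 0 ≤ Real.sin (φ - t) :=
        Real.sin_nonneg_of_nonneg_of_le_pi (by linarith) (by linarith)
      nlinarith
    refine ⟨(ρ, φ), ⟨⟨hρ0, hρr⟩, ⟨hφ0, hφt⟩⟩, ?_⟩
    rw [Complex.polarCoord_symm_apply]
    push_cast
    rw [hρ, hφ]
    exact Complex.norm_mul_cos_add_sin_mul_I c
  · rintro ⟨⟨ρ, φ⟩, ⟨⟨hρ0, hρr⟩, hφ0, hφt⟩, rfl⟩
    simp only [mem_Ioo, mem_Ioi] at *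
    have hsinφ : 0 < Real.sin φ := Real.sin_pos_of_pos_of_lt_pi hφ0 (by linarith)
    have hsintφ : 0 < Real.sin (t - φ) :=
      Real.sin_pos_of_pos_of_lt_pi (by linarith) (by linarith)
    constructor
    · refine ⟨ρ * Real.sin (t - φ) / Real.sin t, ρ * Real.sin φ / Real.sin t,
        by positivity, by positivity, ?_⟩
      rw [Complex.polarCoord_symm_apply, Complex.real_smul, Complex.real_smul, he]
      apply Complex.ext
      · simp only [Complex.add_re, Complex.mul_re, Complex.add_im, Complex.mul_im,
          Complex.ofReal_re, Complex.ofReal_im, Complex.I_re, Complex.I_im,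
          Complex.one_re, Complex.one_im]
        rw [Real.sin_sub]
        field_simp
        ring
      · simp only [Complex.add_re, Complex.mul_re, Complex.add_im, Complex.mul_im,
          Complex.ofReal_re, Complex.ofReal_im, Complex.I_re, Complex.I_im,
          Complex.one_re, Complex.one_im]
        field_simp
        ring
    · rw [mem_ball_zero_iff, Complex.norm_polarCoord_symm]
      rwa [abs_of_pos hρ0]

end
noncomputable section
open Real MeasureTheory Set Metric

lemma li_one_exp {t : ℝ} (ht0 : 0 < t) (htπ : t < π) :
    LinearIndependent ℝ ![(1 : ℂ), Complex.exp (t * Complex.I)] := by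
  have hsint : 0 < Real.sin t := Real.sin_pos_of_pos_of_lt_pi ht0 htπ
  have he : Complex.exp (t * Complex.I)
      = Complex.ofReal (Real.cos t) + Complex.ofReal (Real.sin t) * Complex.I := by
    rw [Complex.exp_mul_I, Complex.ofReal_cos, Complex.ofReal_sin]
  rw [LinearIndependent.pair_iff]
  intro s a hsa
  have him : (s • (1:ℂ) + a • Complex.exp (t * Complex.I)).im = a * Real.sin t := by
    rw [he, Complex.real_smul, Complex.real_smul]
    simp only [Complex.add_re, Complex.mul_re, Complex.add_im, Complex.mul_im,
      Complex.ofReal_re, Complex.ofReal_im, Complex.I_re, Complex.I_im,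
      Complex.one_re, Complex.one_im]
    ring
  have hre : (s • (1:ℂ) + a • Complex.exp (t * Complex.I)).re = s + a * Real.cos t := by
    rw [he, Complex.real_smul, Complex.real_smul]
    simp only [Complex.add_re, Complex.mul_re, Complex.add_im, Complex.mul_im,
      Complex.ofReal_re, Complex.ofReal_im, Complex.I_re, Complex.I_im,
      Complex.one_re, Complex.one_im]
    ring
  rw [hsa] at him hre
  simp only [Complex.zero_im, Complex.zero_re] at him hre
  have ha : a = 0 := by
    rcases mul_eq_zero.1 him.symm with h | h
    · exact h
    · exact absurd h hsint.ne'
  refine ⟨?_, ha⟩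
  rw [ha] at hre
  linarith [hre]

lemma volume_sector {t r : ℝ} (ht0 : 0 < t) (htπ : t < π) (hr : 0 < r) :
    volume (scone 1 (Complex.exp (t * Complex.I)) ∩ ball 0 r)
      = ENNReal.ofReal (t * r ^ 2 / 2) := by
  set S := scone 1 (Complex.exp (t * Complex.I)) ∩ ball (0:ℂ) r with hS
  have hopen : IsOpen S := ((isOpen_scone (li_one_exp ht0 htπ)).inter isOpen_ball)
  have hfin : volume S ≠ ⊤ := by
    refine ne_top_of_le_ne_top (measure_ball_lt_top (x := (0:ℂ)) (r := r)).ne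
      (measure_mono inter_subset_right)
  have hbox : (Ioo (0:ℝ) r ×ˢ Ioo (0:ℝ) t) ⊆ polarCoord.target := by
    rw [polarCoord_target]
    rintro ⟨ρ, φ⟩ ⟨⟨h1, h2⟩, h3, h4⟩
    exact ⟨h1, by constructor <;> [linarith [Real.pi_pos]; linarith]⟩
  have hiff : ∀ p ∈ polarCoord.target, (Complex.polarCoord.symm p ∈ S ↔
      p ∈ Ioo (0:ℝ) r ×ˢ Ioo (0:ℝ) t) := by
    intro p hp
    constructor
    · intro hmem
      rw [hS, sector_eq ht0 htπ hr] at hmem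
      obtain ⟨q, hq, hqe⟩ := hmem
      have : q = p := by
        have hinj := Complex.polarCoord.symm.injOn
        rw [OpenPartialHomeomorph.symm_source] at hinj
        exact hinj (hbox hq) hp hqe
      rwa [← this]
    · intro hmem
      rw [hS, sector_eq ht0 htπ hr]
      exact ⟨p, hmem, rfl⟩
  have key := Complex.integral_comp_polarCoord_symm (S.indicator (1 : ℂ → ℝ))
  have hrhs : ∫ p, S.indicator (1 : ℂ → ℝ) p = (volume S).toReal := by
    rw [MeasureTheory.integral_indicator_one hopen.measurableSet]
    rfl
  have hlhs : (∫ p in polarCoord.target,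
      p.1 • S.indicator (1 : ℂ → ℝ) (Complex.polarCoord.symm p))
      = ∫ p in (Ioo (0:ℝ) r ×ˢ Ioo (0:ℝ) t), p.1 := by
    calc (∫ p in polarCoord.target,
        p.1 • S.indicator (1 : ℂ → ℝ) (Complex.polarCoord.symm p))
        = ∫ p in polarCoord.target,
            (Ioo (0:ℝ) r ×ˢ Ioo (0:ℝ) t).indicator (fun p : ℝ × ℝ => p.1) p := by
          apply setIntegral_congr_fun polarCoord.open_target.measurableSet
          intro p hp
          by_cases hmem : p ∈ Ioo (0:ℝ) r ×ˢ Ioo (0:ℝ) t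
          · simp only [Set.indicator_of_mem hmem, Set.indicator_of_mem ((hiff p hp).2 hmem),
              Pi.one_apply, smul_eq_mul, mul_one]
          · simp only [Set.indicator_of_notMem hmem,
              Set.indicator_of_notMem (fun h => hmem ((hiff p hp).1 h)), smul_zero]
      _ = ∫ p in polarCoord.target ∩ (Ioo (0:ℝ) r ×ˢ Ioo (0:ℝ) t),
            (fun p : ℝ × ℝ => p.1) p := by
          rw [MeasureTheory.setIntegral_indicator
            (measurableSet_Ioo.prod measurableSet_Ioo)]
      _ = ∫ p in (Ioo (0:ℝ) r ×ˢ Ioo (0:ℝ) t), p.1 := by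
          rw [Set.inter_eq_self_of_subset_right hbox]
  have hval : (∫ p in (Ioo (0:ℝ) r ×ˢ Ioo (0:ℝ) t), p.1) = r ^ 2 / 2 * t := by
    rw [Measure.volume_eq_prod, ← Measure.prod_restrict]
    have : (fun p : ℝ × ℝ => p.1) = fun p : ℝ × ℝ => p.1 * (fun _ : ℝ => (1:ℝ)) p.2 := by
      funext p; simp
    rw [this, MeasureTheory.integral_prod_mul (f := fun ρ : ℝ => ρ) (g := fun _ : ℝ => (1:ℝ))]
    have h1 : (∫ ρ in Ioo (0:ℝ) r, ρ) = r ^ 2 / 2 := by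
      rw [← MeasureTheory.integral_Ioc_eq_integral_Ioo,
        ← intervalIntegral.integral_of_le hr.le, integral_id]
      ring
    have h2 : (∫ _ in Ioo (0:ℝ) t, (1:ℝ)) = t := by
      simp [Real.volume_Ioo, ENNReal.toReal_ofReal ht0.le, ht0.le]
    rw [h1, h2]
  rw [hlhs, hrhs, hval] at key
  rw [← ENNReal.ofReal_toReal hfin, ← key]
  congr 1
  ring

end
noncomputable section
open Real MeasureTheory Set Metric

lemma volume_scone_of_normal {u v : ℂ} (M : ℂ ≃ₗᵢ[ℝ] ℂ) {a : ℝ} (ha : 0 < a)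
    (hMu : M u = (a : ℂ)) (him : 0 < (M v).im) {r : ℝ} (hr : 0 < r) :
    volume (scone u v ∩ ball 0 r)
      = ENNReal.ofReal (InnerProductGeometry.angle u v * r ^ 2 / 2) := by
  set V := M v with hV
  have hV0 : V ≠ 0 := by
    intro h; rw [h] at him; simp at him
  set t := Complex.arg V with ht
  have ht0 : 0 < t := by
    rcases lt_or_eq_of_le (Complex.arg_nonneg_iff.2 him.le) with h | h
    · exact h
    · exact absurd (Complex.arg_eq_zero_iff.1 h.symm).2 him.ne'
  have htπ : t < π := by
    rcases lt_or_eq_of_le (Complex.arg_le_pi V) with h | h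
    · exact h
    · exact absurd (Complex.arg_eq_pi_iff.1 h).2 him.ne'
  have he : Complex.exp (t * Complex.I)
      = Complex.ofReal (Real.cos t) + Complex.ofReal (Real.sin t) * Complex.I := by
    rw [Complex.exp_mul_I, Complex.ofReal_cos, Complex.ofReal_sin]
  have hVe : V = (‖V‖) • Complex.exp (t * Complex.I) := by
    rw [he, Complex.real_smul, ht]
    push_cast
    exact (Complex.norm_mul_cos_add_sin_mul_I V).symm
  have habsV : 0 < ‖V‖ := norm_pos_iff.mpr hV0
  -- set equality
  have hset : scone u v ∩ ball 0 r
      = ⇑M ⁻¹' (scone 1 (Complex.exp (t * Complex.I)) ∩ ball 0 r) := by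
    rw [Set.preimage_inter]
    congr 1
    · have h1 : ((a : ℝ) : ℂ) = a • (1:ℂ) := by rw [Complex.real_smul, mul_one]
      rw [← scone_preimage M u v, hMu, ← hV, h1, hVe, scone_smul ha habsV]
    · ext c
      simp only [Set.mem_preimage, mem_ball_zero_iff]
      rw [LinearIsometryEquiv.norm_map]
  -- angle computation
  have hnorm1 : ‖((a:ℝ) : ℂ)‖ = a := by
    rw [Complex.norm_real, Real.norm_eq_abs, abs_of_pos ha]
  have hangle : InnerProductGeometry.angle u v = t := by
    have h1 : InnerProductGeometry.angle u v = InnerProductGeometry.angle (M u) (M v) :=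
      (M.toLinearIsometry.angle_map u v).symm
    rw [h1, hMu, ← hV]
    unfold InnerProductGeometry.angle
    rw [real_inner_comm]
    rw [Complex.inner]
    have h2 : ((a:ℝ):ℂ) * (starRingEnd ℂ) V = (a : ℝ) • (starRingEnd ℂ) V := by
      rw [Complex.real_smul]
    rw [h2]
    have h3 : ((a:ℝ) • (starRingEnd ℂ) V).re = a * V.re := by
      simp [Complex.conj_re]
    rw [h3, hnorm1]
    have h4 : a * V.re / (a * ‖V‖) = V.re / ‖V‖ := by
      rw [mul_div_mul_left _ _ ha.ne']
    rw [h4, ← Complex.cos_arg hV0, ← ht, Real.arccos_cos ht0.le htπ.le]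
  rw [hset, hangle,
    (M.measurePreserving).measure_preimage
      (((isOpen_scone (li_one_exp ht0 htπ)).inter isOpen_ball).measurableSet.nullMeasurableSet),
    volume_sector ht0 htπ hr]

end
noncomputable section
open Real MeasureTheory Set Metric

lemma volume_scone {u v : ℂ} (li : LinearIndependent ℝ ![u, v]) {r : ℝ} (hr : 0 < r) :
    volume (scone u v ∩ ball 0 r)
      = ENNReal.ofReal (InnerProductGeometry.angle u v * r ^ 2 / 2) := by
  have hu0 : u ≠ 0 := by
    have := li.ne_zero 0
    simpa using this
  have habsu : 0 < ‖u‖ := norm_pos_iff.mpr hu0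
  set w : ℂ := (‖u‖ : ℂ) / u with hw
  have hw0 : w ≠ 0 := div_ne_zero (by exact_mod_cast habsu.ne') hu0
  have hwabs : ‖w‖ = 1 := by
    rw [hw, norm_div, Complex.norm_real, Real.norm_eq_abs, abs_of_pos habsu, div_self habsu.ne']
  have hwu : w * u = (‖u‖ : ℂ) := div_mul_cancel₀ _ hu0
  set ω : Circle := ⟨w, by
    show w ∈ Metric.sphere (0:ℂ) 1
    rw [mem_sphere_zero_iff_norm, hwabs]⟩ with hω
  have hωc : (ω : ℂ) = w := rfl
  have him : (w * v).im ≠ 0 := by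
    intro h
    have hvre : w * v = ((w * v).re : ℂ) := by
      apply Complex.ext <;> simp [h]
    have key : (w * v).re • u + (-‖u‖) • v = 0 := by
      have : w * ((w * v).re • u + (-‖u‖) • v) = 0 := by
        rw [mul_add, Complex.real_smul, Complex.real_smul, ← mul_assoc, mul_comm w _,
          mul_assoc, hwu]
        push_cast
        rw [← hvre]
        ring
      rcases mul_eq_zero.1 this with h' | h'
      · exact absurd h' hw0
      · exact h'
    have := (LinearIndependent.pair_iff.1 li _ _ key).2
    simp only [neg_eq_zero, Complex.ofReal_eq_zero] at this
    exact habsu.ne' this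
  rcases him.lt_or_gt with hneg | hpos
  · -- use conjugation ∘ rotation
    set M : ℂ ≃ₗᵢ[ℝ] ℂ := (rotation ω).trans Complex.conjLIE with hM
    have hMu : M u = ((‖u‖ : ℝ) : ℂ) := by
      rw [hM]
      simp only [LinearIsometryEquiv.trans_apply, rotation_apply, hωc, hwu]
      exact Complex.conj_ofReal _
    have hMv : 0 < (M v).im := by
      rw [hM]
      simp only [LinearIsometryEquiv.trans_apply, rotation_apply, hωc, Complex.conjLIE_apply]
      rw [Complex.conj_im]
      linarith
    exact volume_scone_of_normal M habsu hMu hMv hr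
  · set M : ℂ ≃ₗᵢ[ℝ] ℂ := rotation ω with hM
    have hMu : M u = ((‖u‖ : ℝ) : ℂ) := by
      rw [hM, rotation_apply, hωc, hwu]
    have hMv : 0 < (M v).im := by
      rw [hM, rotation_apply, hωc]
      exact hpos
    exact volume_scone_of_normal M habsu hMu hMv hr

end
noncomputable section
open Real MeasureTheory Set Metric

abbrev E2 := EuclideanSpace ℝ (Fin 2)

lemma card_eq_finrank_eucl : Fintype.card (Fin 2) = Module.finrank ℝ E2 := by
  simp [finrank_euclideanSpace_fin]

lemma exists_rad {a b : E2} (li : LinearIndependent ℝ ![a, b]) (x : E2) :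
    ∃ ρ > 0, ∀ α β : ℝ, 0 < α → 0 < β → ‖α • a + β • b‖ < ρ →
      x + (α • a + β • b) ∈ interior (convexHull ℝ {x, x + a, x + b}) := by
  set B := basisOfLinearIndependentOfCardEqFinrank li card_eq_finrank_eucl with hB
  have hB0 : B 0 = a := by rw [hB, coe_basisOfLinearIndependentOfCardEqFinrank]; rfl
  have hB1 : B 1 = b := by rw [hB, coe_basisOfLinearIndependentOfCardEqFinrank]; rfl
  have hrepr : ∀ α β : ℝ, B.equivFun (α • a + β • b) = fun i => ![α, β] i := by
    intro α β
    funext i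
    rw [← hB0, ← hB1, map_add, LinearEquiv.map_smul, LinearEquiv.map_smul]
    simp only [Pi.add_apply, Pi.smul_apply, Module.Basis.equivFun_self, smul_eq_mul]
    fin_cases i <;> norm_num
  have hcoe : ∀ c, B.equivFunL c = B.equivFun c := fun _ => rfl
  set g : E2 → ℝ := fun w => B.equivFunL w 0 + B.equivFunL w 1 with hg
  have hgcont : Continuous g :=
    ((continuous_apply (0 : Fin 2)).comp B.equivFunL.continuous).add
      ((continuous_apply (1 : Fin 2)).comp B.equivFunL.continuous)
  have hU : IsOpen (g ⁻¹' Iio 1) := isOpen_Iio.preimage hgcont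
  have h0 : (0 : E2) ∈ g ⁻¹' Iio 1 := by
    simp only [Set.mem_preimage, hg, Set.mem_Iio, hcoe, map_zero]
    norm_num
  obtain ⟨ρ, hρ0, hball⟩ := Metric.isOpen_iff.1 hU 0 h0
  refine ⟨ρ, hρ0, ?_⟩
  intro α β hα hβ hnorm
  have hcombo : g (α • a + β • b) = α + β := by
    simp only [hg, hcoe, hrepr α β]
    simp
  have hsum : α + β < 1 := by
    have := hball (mem_ball_zero_iff.2 hnorm)
    rwa [Set.mem_preimage, Set.mem_Iio, hcombo] at this
  set T : Set E2 := (fun w => (B.equivFunL (w - x) 0, B.equivFunL (w - x) 1)) ⁻¹'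
      {p : ℝ × ℝ | 0 < p.1 ∧ 0 < p.2 ∧ p.1 + p.2 < 1} with hT
  have hTopen : IsOpen T := by
    apply IsOpen.preimage
    · exact (((continuous_apply (0 : Fin 2)).comp
        (B.equivFunL.continuous.comp (continuous_id.sub continuous_const))).prodMk
        ((continuous_apply (1 : Fin 2)).comp
        (B.equivFunL.continuous.comp (continuous_id.sub continuous_const))))
    · exact (isOpen_lt continuous_const continuous_fst).inter
        ((isOpen_lt continuous_const continuous_snd).inter
          (isOpen_lt (continuous_fst.add continuous_snd) continuous_const))
  have hTsub : T ⊆ convexHull ℝ {x, x + a, x + b} := by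
    intro w hw
    simp only [hT, Set.mem_preimage, Set.mem_setOf_eq] at hw
    obtain ⟨h1, h2, h3⟩ := hw
    simp only [hcoe] at h1 h2 h3
    set c0 := B.equivFun (w - x) 0 with hc0
    set c1 := B.equivFun (w - x) 1 with hc1
    have hw' : w = x + (c0 • a + c1 • b) := by
      have hwx : w - x = c0 • a + c1 • b := by
        conv_lhs => rw [← B.equivFun.symm_apply_apply (w - x)]
        rw [B.equivFun_symm_apply, Fin.sum_univ_two, hB0, hB1]
      rw [← hwx]
      abel
    rw [hw']
    have hmem3 : ∀ i : Fin 3, ![x, x + a, x + b] i ∈ convexHull ℝ {x, x + a, x + b} := by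
      intro i
      apply subset_convexHull
      fin_cases i <;> simp
    have := (convex_convexHull ℝ ({x, x + a, x + b} : Set E2)).sum_mem
      (t := (Finset.univ : Finset (Fin 3))) (w := ![1 - c0 - c1, c0, c1])
      (z := ![x, x + a, x + b])
      (fun i _ => by fin_cases i <;> simp <;> linarith)
      (by simp [Fin.sum_univ_three]; ring)
      (fun i _ => hmem3 i)
    convert this using 1
    simp only [Fin.sum_univ_three]
    simp only [Matrix.cons_val_zero, Matrix.cons_val_one, Matrix.head_cons,
      Matrix.cons_val_two, Matrix.tail_cons]
    module
  have hmem : x + (α • a + β • b) ∈ T := by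
    have hsub : x + (α • a + β • b) - x = α • a + β • b := by abel
    simp only [hT, Set.mem_preimage, Set.mem_setOf_eq, hsub, hcoe, hrepr α β]
    norm_num [hα, hβ, hsum]
  exact interior_maximal hTsub hTopen hmem

end

open MeasureTheory Set Metric ENNReal

/-- If the triangles `τ k = conv {x, y k, z k}`, `k = 1, …, N`, in ℝ² share
the vertex `x`, have pairwise disjoint interiors, and each inner angle at `x` is at
least `θ > 0`, then `N ≤ 2π/θ`; in particular `N ≤ ⌊2π/θ⌋`. -/
theorem stmt7 (θ : ℝ) (hθ : 0 < θ) (N : ℕ) (x : EuclideanSpace ℝ (Fin 2))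
    (y z : Fin N → EuclideanSpace ℝ (Fin 2))
    (hind : ∀ k, AffineIndependent ℝ ![x, y k, z k])
    (hdisj : ∀ k l, k ≠ l →
      Disjoint (interior (convexHull ℝ {x, y k, z k}))
        (interior (convexHull ℝ {x, y l, z l})))
    (hangle : ∀ k, θ ≤ EuclideanGeometry.angle (y k) x (z k)) :
    (N : ℝ) ≤ 2 * π / θ ∧ (N : ℤ) ≤ ⌊2 * π / θ⌋ := by
  have hmain : (N : ℝ) ≤ 2 * π / θ := by
    rcases Nat.eq_zero_or_pos N with hN | hN
    · rw [hN]
      simp only [Nat.cast_zero]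
      positivity
    haveI : Nonempty (Fin N) := Fin.pos_iff_nonempty.1 hN
    set F : E2 ≃ₗᵢ[ℝ] ℂ := Complex.orthonormalBasisOneI.repr.symm with hF
    set u : Fin N → ℂ := fun k => F (y k - x) with hu
    set v : Fin N → ℂ := fun k => F (z k - x) with hv
    have liE : ∀ k, LinearIndependent ℝ ![y k - x, z k - x] := by
      intro k
      have h := (affineIndependent_iff_linearIndependent_vsub ℝ ![x, y k, z k] 0).1 (hind k)
      set e : Fin 2 → {i : Fin 3 // i ≠ 0} := ![⟨1, by decide⟩, ⟨2, by decide⟩] with he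
      have hinj : Function.Injective e := by
        intro i j hij
        fin_cases i <;> fin_cases j <;> first | rfl | (exfalso; exact absurd (congrArg Subtype.val hij) (by decide))
      have h2 := h.comp e hinj
      convert h2 using 1
      funext j
      fin_cases j <;> simp [he, vsub_eq_sub]
      all_goals rfl
    have liuv : ∀ k, LinearIndependent ℝ ![u k, v k] := by
      intro k
      have h := (liE k).map' (F.toLinearEquiv : E2 →ₗ[ℝ] ℂ) F.toLinearEquiv.ker
      convert h using 1
      funext j
      fin_cases j <;> simp [hu, hv]
      all_goals rfl
    have hangle' : ∀ k, θ ≤ InnerProductGeometry.angle (u k) (v k) := by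
      intro k
      have h := hangle k
      have heq : EuclideanGeometry.angle (y k) x (z k)
          = InnerProductGeometry.angle (u k) (v k) := by
        have h0 : EuclideanGeometry.angle (y k) x (z k)
            = InnerProductGeometry.angle (y k - x) (z k - x) := rfl
        rw [h0, hu, hv]
        exact (F.toLinearIsometry.angle_map (y k - x) (z k - x)).symm
      linarith
    have hrad : ∀ k, ∃ ρ > 0, ∀ α β : ℝ, 0 < α → 0 < β →
        ‖α • (y k - x) + β • (z k - x)‖ < ρ →
        x + (α • (y k - x) + β • (z k - x)) ∈ interior (convexHull ℝ {x, y k, z k}) := by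
      intro k
      obtain ⟨ρ, hρ, hmem⟩ := exists_rad (liE k) x
      refine ⟨ρ, hρ, fun α β hα hβ hn => ?_⟩
      have h := hmem α β hα hβ hn
      have hxy : x + (y k - x) = y k := by abel
      have hxz : x + (z k - x) = z k := by abel
      rwa [hxy, hxz] at h
    choose ρ hρpos hρmem using hrad
    set r : ℝ := Finset.univ.inf' Finset.univ_nonempty ρ with hrdef
    have hr : 0 < r := by
      rw [hrdef, Finset.lt_inf'_iff]
      exact fun k _ => hρpos k
    have hrle : ∀ k, r ≤ ρ k := fun k => Finset.inf'_le _ (Finset.mem_univ k)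
    set S : Fin N → Set ℂ := fun k => scone (u k) (v k) ∩ ball 0 r with hS
    have hSopen : ∀ k, IsOpen (S k) := fun k => (isOpen_scone (liuv k)).inter isOpen_ball
    have hpoint : ∀ (m : Fin N) (c : ℂ) (α β : ℝ), 0 < α → 0 < β →
        c = α • u m + β • v m → c ∈ ball (0:ℂ) r →
        x + F.symm c ∈ interior (convexHull ℝ {x, y m, z m}) := by
      intro m c α β hα hβ hc hcb
      have hFc : F.symm c = α • (y m - x) + β • (z m - x) := by
        rw [hc, map_add, LinearIsometryEquiv.map_smul, LinearIsometryEquiv.map_smul,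
          hu, hv, F.symm_apply_apply, F.symm_apply_apply]
      have hn : ‖α • (y m - x) + β • (z m - x)‖ < r := by
        rw [← hFc, LinearIsometryEquiv.norm_map]
        exact mem_ball_zero_iff.1 hcb
      have h := hρmem m α β hα hβ (lt_of_lt_of_le hn (hrle m))
      rwa [hFc]
    have hSdisj : Pairwise (Function.onFun Disjoint S) := by
      intro k l hkl
      rw [Function.onFun, Set.disjoint_left]
      intro c hck hcl
      obtain ⟨⟨α, β, hα, hβ, hc⟩, hcb⟩ := hck
      obtain ⟨⟨α', β', hα', hβ', hc'⟩, _⟩ := hcl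
      exact Set.disjoint_left.1 (hdisj k l hkl)
        (hpoint k c α β hα hβ hc hcb) (hpoint l c α' β' hα' hβ' hc' hcb)
    have hsum : ∑ k : Fin N, volume (S k) ≤ volume (ball (0:ℂ) r) :=
      calc ∑ k : Fin N, volume (S k) = ∑' k : Fin N, volume (S k) := (tsum_fintype _).symm
        _ = volume (⋃ k, S k) :=
            (measure_iUnion hSdisj fun k => (hSopen k).measurableSet).symm
        _ ≤ volume (ball (0:ℂ) r) :=
            measure_mono (iUnion_subset fun k => inter_subset_right)
    have hlow : ∀ k : Fin N, ENNReal.ofReal (θ * r ^ 2 / 2) ≤ volume (S k) := by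
      intro k
      rw [hS]
      show ENNReal.ofReal (θ * r ^ 2 / 2) ≤ volume (scone (u k) (v k) ∩ ball 0 r)
      rw [volume_scone (liuv k) hr]
      apply ENNReal.ofReal_le_ofReal
      have h := hangle' k
      nlinarith [sq_nonneg r]
    have htotal : (N : ℝ≥0∞) * ENNReal.ofReal (θ * r ^ 2 / 2) ≤ volume (ball (0:ℂ) r) := by
      calc (N : ℝ≥0∞) * ENNReal.ofReal (θ * r ^ 2 / 2)
          = ∑ _k : Fin N, ENNReal.ofReal (θ * r ^ 2 / 2) := by
            rw [Finset.sum_const, Finset.card_univ, Fintype.card_fin, nsmul_eq_mul]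
        _ ≤ ∑ k : Fin N, volume (S k) := Finset.sum_le_sum fun k _ => hlow k
        _ ≤ volume (ball (0:ℂ) r) := hsum
    rw [Complex.volume_ball] at htotal
    have h1 : (N : ℝ≥0∞) * ENNReal.ofReal (θ * r ^ 2 / 2)
        = ENNReal.ofReal ((N : ℝ) * (θ * r ^ 2 / 2)) := by
      rw [ENNReal.ofReal_mul (by positivity : (0:ℝ) ≤ (N:ℝ)), ENNReal.ofReal_natCast]
    have h2 : (ENNReal.ofReal r ^ 2 * (NNReal.pi : ℝ≥0∞)) = ENNReal.ofReal (r ^ 2 * π) := by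
      rw [← ENNReal.ofReal_pow hr.le, ENNReal.ofReal_mul (by positivity)]
      congr 1
      rw [← ENNReal.ofReal_coe_nnreal, NNReal.coe_real_pi]
    rw [h1, h2] at htotal
    have hreal : (N : ℝ) * (θ * r ^ 2 / 2) ≤ r ^ 2 * π :=
      (ENNReal.ofReal_le_ofReal_iff (by positivity)).1 htotal
    rw [le_div_iff₀ hθ]
    have hr2 : 0 < r ^ 2 := by positivity
    nlinarith [hreal]
  exact ⟨hmain, Int.le_floor.2 (by exact_mod_cast hmain)⟩
end

section
/- Let A : ℝⁿ → ℝⁿ be a linear map with det A ≠ 0, b ∈ ℝⁿ, and define the affine map η(x) = A x + b. Let τ ⊆ ℝⁿ be a measurable set and let u : ℝⁿ → ℝ be twice continuously differentiable. Then the H² seminorm of the pullback û = u ∘ η satisfies ∫_{η⁻¹(τ)} ‖D²û(x)‖² dx ≤ |det A|⁻¹ · ‖A‖⁴ · ∫_τ ‖D²u(y)‖² dy, where D² denotes the second (iterated Fréchet) derivative and ‖·‖ its operator norm. -/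
open MeasureTheory

section aux
variable {E F : Type*} [NormedAddCommGroup E] [NormedSpace ℝ E]
  [NormedAddCommGroup F] [NormedSpace ℝ F]

lemma iteratedFDeriv_comp_add_const' (f : E → F) (b : E) :
    ∀ (k : ℕ), ContDiff ℝ k f → ∀ x : E,
      iteratedFDeriv ℝ k (fun y => f (y + b)) x = iteratedFDeriv ℝ k f (x + b) := by
  intro k
  induction k with
  | zero => intro _ x; ext m; simp [iteratedFDeriv_zero_apply]
  | succ k IH =>
    intro hf x
    have hdiff : Differentiable ℝ (iteratedFDeriv ℝ k f) :=
      hf.differentiable_iteratedFDeriv (by exact_mod_cast Nat.lt_succ_self k)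
    have h1 : iteratedFDeriv ℝ k (fun y => f (y + b)) =
        fun z => iteratedFDeriv ℝ k f (z + b) :=
      funext (IH (hf.of_le (by exact_mod_cast Nat.le_succ k)))
    have h2 : HasFDerivAt (fun z => iteratedFDeriv ℝ k f (z + b))
        (fderiv ℝ (iteratedFDeriv ℝ k f) (x + b)) x := by
      have := (hdiff (x + b)).hasFDerivAt.comp x ((hasFDerivAt_id x).add_const b)
      exact this
    ext m
    rw [iteratedFDeriv_succ_apply_left, iteratedFDeriv_succ_apply_left, h1, h2.fderiv]
end aux

section ptwise
variable {E : Type*} [NormedAddCommGroup E] [NormedSpace ℝ E]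

lemma norm_iteratedFDeriv_two_comp_affine_le (u : E → ℝ) (hu : ContDiff ℝ 2 u)
    (A : E →L[ℝ] E) (b : E) (x : E) :
    ‖iteratedFDeriv ℝ 2 (fun p => u (A p + b)) x‖ ≤
      ‖iteratedFDeriv ℝ 2 u (A x + b)‖ * ‖A‖ ^ 2 := by
  have hcomp : (fun p => u (A p + b)) = (fun y => u (y + b)) ∘ (A : E → E) := rfl
  have hub : ContDiff ℝ 2 (fun y : E => u (y + b)) :=
    hu.comp (contDiff_id.add contDiff_const)
  rw [hcomp, A.iteratedFDeriv_comp_right hub x le_rfl,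
    iteratedFDeriv_comp_add_const' u b 2 hu (A x)]
  calc ‖(iteratedFDeriv ℝ 2 u (A x + b)).compContinuousLinearMap fun _ => A‖
      ≤ ‖iteratedFDeriv ℝ 2 u (A x + b)‖ * ∏ _i : Fin 2, ‖A‖ :=
        (iteratedFDeriv ℝ 2 u (A x + b)).norm_compContinuousLinearMap_le _
    _ = ‖iteratedFDeriv ℝ 2 u (A x + b)‖ * ‖A‖ ^ 2 := by
        rw [Finset.prod_const]; norm_num
end ptwise


/-- For an affine change of variables `η x = A x + b` with `det A ≠ 0`, a
measurable set `τ ⊆ ℝⁿ`, and a C² function `u : ℝⁿ → ℝ`, the squared H² seminorm of the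
pullback `û = u ∘ η` satisfies
`∫_{η⁻¹ τ} ‖D²û‖² ≤ |det A|⁻¹ ‖A‖⁴ ∫_τ ‖D²u‖²`. -/
theorem stmt9 {n : ℕ} (A : EuclideanSpace ℝ (Fin n) →L[ℝ] EuclideanSpace ℝ (Fin n))
    (hA : LinearMap.det (A : EuclideanSpace ℝ (Fin n) →ₗ[ℝ] EuclideanSpace ℝ (Fin n)) ≠ 0)
    (b : EuclideanSpace ℝ (Fin n)) (η : EuclideanSpace ℝ (Fin n) → EuclideanSpace ℝ (Fin n))
    (hη : ∀ p, η p = A p + b) (τ : Set (EuclideanSpace ℝ (Fin n))) (hτ : MeasurableSet τ)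
    (u : EuclideanSpace ℝ (Fin n) → ℝ) (hu : ContDiff ℝ 2 u) :
    ∫ p in η ⁻¹' τ, ‖iteratedFDeriv ℝ 2 (u ∘ η) p‖ ^ 2 ≤
      |LinearMap.det (A : EuclideanSpace ℝ (Fin n) →ₗ[ℝ] EuclideanSpace ℝ (Fin n))|⁻¹ *
        ‖A‖ ^ 4 * ∫ q in τ, ‖iteratedFDeriv ℝ 2 u q‖ ^ 2 := by
  set d := LinearMap.det (A : EuclideanSpace ℝ (Fin n) →ₗ[ℝ] EuclideanSpace ℝ (Fin n)) with hd
  set g : EuclideanSpace ℝ (Fin n) → ℝ := fun y => ‖iteratedFDeriv ℝ 2 u y‖ ^ 2 with hgdef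
  have hηfun : η = fun p => A p + b := funext hη
  have hcη : ContDiff ℝ 2 η := by
    rw [hηfun]; exact (A.contDiff.add contDiff_const)
  have huη : ContDiff ℝ 2 (u ∘ η) := hu.comp hcη
  have hg : Continuous g :=
    (hu.continuous_iteratedFDeriv (by exact_mod_cast le_rfl)).norm.pow 2
  have hf : Continuous fun p => ‖iteratedFDeriv ℝ 2 (u ∘ η) p‖ ^ 2 :=
    (huη.continuous_iteratedFDeriv (by exact_mod_cast le_rfl)).norm.pow 2
  have hmeasη : Measurable η := hcη.continuous.measurable
  -- the inverse
  let e := A.toContinuousLinearEquivOfDetNeZero hA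
  let B : EuclideanSpace ℝ (Fin n) →L[ℝ] EuclideanSpace ℝ (Fin n) := (e.symm : EuclideanSpace ℝ (Fin n) →L[ℝ] EuclideanSpace ℝ (Fin n))
  have hAB : ∀ z : EuclideanSpace ℝ (Fin n), A (B z) = z := fun z => e.apply_symm_apply z
  have hBA : ∀ z : EuclideanSpace ℝ (Fin n), B (A z) = z := fun z => e.symm_apply_apply z
  -- pointwise bounds
  have hbound : ∀ x, ‖iteratedFDeriv ℝ 2 (u ∘ η) x‖ ^ 2 ≤ ‖A‖ ^ 4 * g (η x) := by
    intro x
    have h0 : (u ∘ η) = fun p => u (A p + b) := by funext p; simp [hη p]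
    have h := norm_iteratedFDeriv_two_comp_affine_le u hu A b x
    rw [← h0] at h
    have h2 := pow_le_pow_left₀ (norm_nonneg _) h 2
    calc ‖iteratedFDeriv ℝ 2 (u ∘ η) x‖ ^ 2
        ≤ (‖iteratedFDeriv ℝ 2 u (A x + b)‖ * ‖A‖ ^ 2) ^ 2 := h2
      _ = ‖A‖ ^ 4 * ‖iteratedFDeriv ℝ 2 u (A x + b)‖ ^ 2 := by ring
      _ = ‖A‖ ^ 4 * g (η x) := by rw [hη x]
  have hrev : ∀ x, g (η x) ≤ ‖B‖ ^ 4 * ‖iteratedFDeriv ℝ 2 (u ∘ η) x‖ ^ 2 := by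
    intro x
    have h1 : (fun y : EuclideanSpace ℝ (Fin n) => u (y + b)) = (u ∘ η) ∘ ⇑B := by
      funext z; simp [Function.comp, hη, hAB z]
    have h2 : iteratedFDeriv ℝ 2 (fun y : EuclideanSpace ℝ (Fin n) => u (y + b)) (A x) =
        iteratedFDeriv ℝ 2 u (A x + b) :=
      iteratedFDeriv_comp_add_const' u b 2 hu (A x)
    have h3 : ‖iteratedFDeriv ℝ 2 ((u ∘ η) ∘ ⇑B) (A x)‖ ≤
        ‖iteratedFDeriv ℝ 2 (u ∘ η) (B (A x))‖ * ‖B‖ ^ 2 := by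
      rw [B.iteratedFDeriv_comp_right huη (A x) le_rfl]
      calc ‖(iteratedFDeriv ℝ 2 (u ∘ η) (B (A x))).compContinuousLinearMap fun _ => B‖
          ≤ ‖iteratedFDeriv ℝ 2 (u ∘ η) (B (A x))‖ * ∏ _i : Fin 2, ‖B‖ :=
            (iteratedFDeriv ℝ 2 (u ∘ η) (B (A x))).norm_compContinuousLinearMap_le _
        _ = ‖iteratedFDeriv ℝ 2 (u ∘ η) (B (A x))‖ * ‖B‖ ^ 2 := by
            rw [Finset.prod_const, Finset.card_univ, Fintype.card_fin]
    rw [hBA x] at h3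
    have h4 : ‖iteratedFDeriv ℝ 2 u (A x + b)‖ ≤
        ‖iteratedFDeriv ℝ 2 (u ∘ η) x‖ * ‖B‖ ^ 2 := by rw [← h2, h1]; exact h3
    have h5 := pow_le_pow_left₀ (norm_nonneg _) h4 2
    calc g (η x) = ‖iteratedFDeriv ℝ 2 u (A x + b)‖ ^ 2 := by rw [hgdef, hη x]
      _ ≤ (‖iteratedFDeriv ℝ 2 (u ∘ η) x‖ * ‖B‖ ^ 2) ^ 2 := h5
      _ = ‖B‖ ^ 4 * ‖iteratedFDeriv ℝ 2 (u ∘ η) x‖ ^ 2 := by ring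
  -- measure computation
  have hmap : Measure.map η (volume : Measure (EuclideanSpace ℝ (Fin n))) = ENNReal.ofReal |d⁻¹| • volume := by
    have h0 : Measure.map (⇑(A : EuclideanSpace ℝ (Fin n) →ₗ[ℝ] EuclideanSpace ℝ (Fin n))) (volume : Measure (EuclideanSpace ℝ (Fin n))) =
        ENNReal.ofReal |d⁻¹| • volume :=
      Measure.map_linearMap_addHaar_eq_smul_addHaar volume hA
    have hcoe : ⇑(A : EuclideanSpace ℝ (Fin n) →ₗ[ℝ] EuclideanSpace ℝ (Fin n)) = ⇑A := rfl
    rw [hcoe] at h0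
    have hsplit : η = (fun y => y + b) ∘ ⇑A := by funext p; simp [hη p]
    rw [hsplit, ← Measure.map_map (measurable_add_const b) A.continuous.measurable, h0,
      Measure.map_smul, map_add_right_eq_self volume b]
  have hc0 : ENNReal.ofReal |d⁻¹| ≠ 0 := by
    rw [Ne, ENNReal.ofReal_eq_zero, not_le]
    exact abs_pos.2 (inv_ne_zero hA)
  have key : ∫ x in η ⁻¹' τ, g (η x) = |d|⁻¹ * ∫ y in τ, g y := by
    calc ∫ x in η ⁻¹' τ, g (η x)
        = ∫ y in τ, g y ∂(Measure.map η volume) :=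
          (setIntegral_map hτ hg.aestronglyMeasurable hmeasη.aemeasurable).symm
      _ = ∫ y in τ, g y ∂(ENNReal.ofReal |d⁻¹| • volume) := by rw [hmap]
      _ = |d|⁻¹ * ∫ y in τ, g y := by
          rw [Measure.restrict_smul, integral_smul_measure,
            ENNReal.toReal_ofReal (abs_nonneg _), abs_inv, smul_eq_mul]
  have hIntIff : IntegrableOn (fun x => g (η x)) (η ⁻¹' τ) volume ↔
      IntegrableOn g τ volume := by
    have hcomp : (fun x => g (η x)) = g ∘ η := rfl
    rw [IntegrableOn, IntegrableOn, hcomp,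
      ← integrable_map_measure hg.aestronglyMeasurable
        ((hmeasη.aemeasurable).restrict (s := η ⁻¹' τ)),
      ← Measure.restrict_map hmeasη hτ, hmap, Measure.restrict_smul,
      integrable_smul_measure hc0 ENNReal.ofReal_ne_top]
  by_cases hInt : IntegrableOn g τ volume
  · have hIntc : IntegrableOn (fun x => g (η x)) (η ⁻¹' τ) volume := hIntIff.2 hInt
    calc ∫ p in η ⁻¹' τ, ‖iteratedFDeriv ℝ 2 (u ∘ η) p‖ ^ 2
        ≤ ∫ x in η ⁻¹' τ, ‖A‖ ^ 4 * g (η x) :=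
          integral_mono_of_nonneg (Filter.Eventually.of_forall fun x => by positivity)
            (hIntc.const_mul _) (Filter.Eventually.of_forall hbound)
      _ = ‖A‖ ^ 4 * ∫ x in η ⁻¹' τ, g (η x) := integral_const_mul _ _
      _ = ‖A‖ ^ 4 * (|d|⁻¹ * ∫ y in τ, g y) := by rw [key]
      _ = |d|⁻¹ * ‖A‖ ^ 4 * ∫ q in τ, g q := by ring
  · have hIntc : ¬ IntegrableOn (fun x => g (η x)) (η ⁻¹' τ) volume :=
      fun h => hInt (hIntIff.1 h)
    have hLHS : ¬ IntegrableOn (fun p => ‖iteratedFDeriv ℝ 2 (u ∘ η) p‖ ^ 2)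
        (η ⁻¹' τ) volume := by
      intro h
      exact hIntc <| (h.const_mul (‖B‖ ^ 4)).mono'
        ((hg.comp hcη.continuous).aestronglyMeasurable)
        (Filter.Eventually.of_forall fun x => by
          rw [Real.norm_of_nonneg (pow_nonneg (norm_nonneg _) 2)]; exact hrev x)
    rw [integral_undef hInt, integral_undef hLHS, mul_zero]
end

section
/- For every α with 0 < α ≤ π/3 there exists a constant D ≥ 1 such that every triangle τ = conv{x₁, x₂, x₃} ⊆ ℝ² satisfying the minimum angle condition (all three inner angles of τ are ≥ α) satisfies the shape regularity condition with constant D: there exist c ∈ ℝ² and r > 0 with closedBall(c, r) ⊆ τ and diam τ ≤ 2rD. -/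
open Real

open scoped RealInnerProductSpace

namespace Stmt12Aux

variable {V : Type*} [NormedAddCommGroup V] [InnerProductSpace ℝ V]

noncomputable def perp (w u : V) : V := w - (⟪w, u⟫ / ‖u‖ ^ 2) • u

lemma inner_perp_right (w u : V) (hu : u ≠ 0) : ⟪perp w u, u⟫ = 0 := by
  have h : ‖u‖ ≠ 0 := norm_ne_zero_iff.mpr hu
  rw [perp, inner_sub_left, real_inner_smul_left, real_inner_self_eq_norm_sq]
  field_simp
  ring

lemma inner_self_perp (w u : V) (hu : u ≠ 0) : ⟪w, perp w u⟫ = ‖perp w u‖ ^ 2 := by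
  have h : ⟪u, perp w u⟫ = 0 := by
    rw [real_inner_comm]; exact inner_perp_right w u hu
  have hw : w = perp w u + (⟪w, u⟫ / ‖u‖ ^ 2) • u := by rw [perp]; module
  calc ⟪w, perp w u⟫ = ⟪perp w u + (⟪w, u⟫ / ‖u‖ ^ 2) • u, perp w u⟫ := by rw [← hw]
    _ = ‖perp w u‖ ^ 2 := by
        rw [inner_add_left, real_inner_smul_left, real_inner_self_eq_norm_sq, h]
        ring

lemma perp_shift (w u : V) (hu : u ≠ 0) : perp (w - u) (-u) = perp w u := by
  have h : ‖u‖ ≠ 0 := norm_ne_zero_iff.mpr hu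
  simp only [perp, inner_neg_right, inner_sub_left, norm_neg, real_inner_self_eq_norm_sq]
  match_scalars <;> field_simp <;> ring

lemma norm_perp (w u : V) (hu : u ≠ 0) :
    ‖perp w u‖ = ‖w‖ * Real.sin (InnerProductGeometry.angle w u) := by
  have h : ‖u‖ ≠ 0 := norm_ne_zero_iff.mpr hu
  have hsq : ‖perp w u‖ ^ 2 = ‖w‖ ^ 2 - ⟪w, u⟫ ^ 2 / ‖u‖ ^ 2 := by
    have h1 : ‖(⟪w, u⟫ / ‖u‖ ^ 2 : ℝ) • u‖ ^ 2 = (⟪w, u⟫ / ‖u‖ ^ 2) ^ 2 * ‖u‖ ^ 2 := by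
      rw [norm_smul, mul_pow, Real.norm_eq_abs, sq_abs]
    rw [perp, norm_sub_sq_real, real_inner_smul_right, h1]
    field_simp
    ring
  have hrhs : (‖w‖ * Real.sin (InnerProductGeometry.angle w u)) ^ 2
      = ‖w‖ ^ 2 - ⟪w, u⟫ ^ 2 / ‖u‖ ^ 2 := by
    by_cases hw : w = 0
    · simp [hw]
    · have hw2 : ‖w‖ ≠ 0 := norm_ne_zero_iff.mpr hw
      rw [mul_pow, Real.sin_sq, InnerProductGeometry.cos_angle]
      field_simp
  have h1 : 0 ≤ Real.sin (InnerProductGeometry.angle w u) :=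
    Real.sin_nonneg_of_nonneg_of_le_pi (InnerProductGeometry.angle_nonneg _ _)
      (InnerProductGeometry.angle_le_pi _ _)
  have h2 : 0 ≤ ‖w‖ * Real.sin (InnerProductGeometry.angle w u) :=
    mul_nonneg (norm_nonneg _) h1
  rw [← Real.sqrt_sq (norm_nonneg (perp w u)), hsq, ← hrhs, Real.sqrt_sq h2]

lemma coeff_nonneg {n pb cb : V} {r : ℝ} (hn : 0 < ‖n‖) (hr3 : 3 * r ≤ ‖n‖)
    (hp : ‖pb - cb‖ ≤ r) (hc : ⟪cb, n⟫ = ‖n‖ ^ 2 / 3) : 0 ≤ ⟪pb, n⟫ / ‖n‖ ^ 2 := by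
  have hcs := abs_real_inner_le_norm (pb - cb) n
  have h1 : ⟪pb - cb, n⟫ = ⟪pb, n⟫ - ⟪cb, n⟫ := inner_sub_left _ _ _
  have h2 := (abs_le.mp hcs).1
  have h3 : 0 ≤ ⟪pb, n⟫ := by
    nlinarith [mul_le_mul_of_nonneg_right hp (norm_nonneg n),
      mul_le_mul_of_nonneg_right hr3 (norm_nonneg n)]
  exact div_nonneg h3 (by positivity)

lemma sin_lb {α θ : ℝ} (hα : 0 < α) (hα2 : α ≤ π / 2) (h1 : α ≤ θ) (h2 : θ ≤ π - α) :
    Real.sin α ≤ Real.sin θ := by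
  rcases le_total θ (π / 2) with h | h
  · exact Real.sin_le_sin_of_le_of_le_pi_div_two (by linarith [Real.pi_pos]) h h1
  · rw [← Real.sin_pi_sub θ]
    exact Real.sin_le_sin_of_le_of_le_pi_div_two (by linarith [Real.pi_pos]) (by linarith)
      (by linarith)

lemma height_lb {h s s' sx sy sa d : ℝ} (e1 : h = s * sx) (e2 : h = s' * sy)
    (hs : 0 ≤ s) (hs' : 0 ≤ s') (hx : sa ≤ sx) (hy : sa ≤ sy) (hsa : 0 ≤ sa)
    (hd : d ≤ s + s') : d * sa / 2 ≤ h := by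
  nlinarith [mul_le_mul_of_nonneg_left hx hs, mul_le_mul_of_nonneg_left hy hs',
    mul_le_mul_of_nonneg_right hd hsa]

end Stmt12Aux


open Stmt12Aux in
/-- For every `α ∈ (0, π/3]` there is a constant `D ≥ 1` such that every
triangle in ℝ² all of whose inner angles are at least `α` satisfies the shape regularity
condition with constant `D`: it contains a closed ball of some radius `r > 0` with
`diam τ ≤ 2 r D`. -/
theorem stmt12 (α : ℝ) (hα₀ : 0 < α) (hα₁ : α ≤ π / 3) :
    ∃ D : ℝ, 1 ≤ D ∧
      ∀ x₁ x₂ x₃ : EuclideanSpace ℝ (Fin 2), AffineIndependent ℝ ![x₁, x₂, x₃] →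
        α ≤ EuclideanGeometry.angle x₂ x₁ x₃ →
        α ≤ EuclideanGeometry.angle x₁ x₂ x₃ →
        α ≤ EuclideanGeometry.angle x₁ x₃ x₂ →
        ∃ (c : EuclideanSpace ℝ (Fin 2)) (r : ℝ), 0 < r ∧
          Metric.closedBall c r ⊆ convexHull ℝ {x₁, x₂, x₃} ∧
          Metric.diam (convexHull ℝ {x₁, x₂, x₃} : Set (EuclideanSpace ℝ (Fin 2))) ≤
            2 * r * D := by
  have hπ := Real.pi_pos
  have hsinα : 0 < Real.sin α := Real.sin_pos_of_pos_of_lt_pi hα₀ (by linarith)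
  refine ⟨3 / Real.sin α, ?_, ?_⟩
  · rw [le_div_iff₀ hsinα]
    nlinarith [Real.sin_le_one α]
  intro x₁ x₂ x₃ hind hA hB hC
  have h12 : x₁ ≠ x₂ := by
    intro h; exact (by decide : (0 : Fin 3) ≠ 1) (hind.injective (by simpa using h))
  have h13 : x₁ ≠ x₃ := by
    intro h; exact (by decide : (0 : Fin 3) ≠ 2) (hind.injective (by simpa using h))
  have h23 : x₂ ≠ x₃ := by
    intro h; exact (by decide : (1 : Fin 3) ≠ 2) (hind.injective (by simpa using h))
  have h12v : x₁ - x₂ ≠ 0 := sub_ne_zero.mpr h12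
  have h21v : x₂ - x₁ ≠ 0 := sub_ne_zero.mpr h12.symm
  have h13v : x₁ - x₃ ≠ 0 := sub_ne_zero.mpr h13
  have h31v : x₃ - x₁ ≠ 0 := sub_ne_zero.mpr h13.symm
  have h23v : x₂ - x₃ ≠ 0 := sub_ne_zero.mpr h23
  have h32v : x₃ - x₂ ≠ 0 := sub_ne_zero.mpr h23.symm
  -- angle sum and sine lower bounds
  have hsum : EuclideanGeometry.angle x₂ x₁ x₃ + EuclideanGeometry.angle x₁ x₂ x₃ +
      EuclideanGeometry.angle x₁ x₃ x₂ = π := by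
    have h := EuclideanGeometry.angle_add_angle_add_angle_eq_pi
      (p₁ := x₁) (p₂ := x₂) (p₃ := x₃) h12.symm
    rw [EuclideanGeometry.angle_comm x₂ x₃ x₁, EuclideanGeometry.angle_comm x₃ x₁ x₂] at h
    linarith
  have hα2 : α ≤ π / 2 := by linarith
  have hsA : Real.sin α ≤ Real.sin (EuclideanGeometry.angle x₂ x₁ x₃) :=
    sin_lb hα₀ hα2 hA (by linarith)
  have hsB : Real.sin α ≤ Real.sin (EuclideanGeometry.angle x₁ x₂ x₃) :=
    sin_lb hα₀ hα2 hB (by linarith)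
  have hsC : Real.sin α ≤ Real.sin (EuclideanGeometry.angle x₁ x₃ x₂) :=
    sin_lb hα₀ hα2 hC (by linarith)
  have hang : ∀ a b c : EuclideanSpace ℝ (Fin 2), EuclideanGeometry.angle a b c =
      InnerProductGeometry.angle (a - b) (c - b) := by
    intro a b c
    simp [EuclideanGeometry.angle, vsub_eq_sub]
  -- normals
  set n₁ := perp (x₁ - x₂) (x₃ - x₂) with hn₁def
  set n₂ := perp (x₂ - x₁) (x₃ - x₁) with hn₂def
  set n₃ := perp (x₃ - x₂) (x₁ - x₂) with hn₃def
  have e1B : ‖n₁‖ = ‖x₁ - x₂‖ * Real.sin (EuclideanGeometry.angle x₁ x₂ x₃) := by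
    rw [hn₁def, norm_perp _ _ h32v, hang]
  have e1C : ‖n₁‖ = ‖x₁ - x₃‖ * Real.sin (EuclideanGeometry.angle x₁ x₃ x₂) := by
    have hshift : n₁ = perp (x₁ - x₃) (x₂ - x₃) := by
      rw [hn₁def, ← perp_shift (x₁ - x₂) (x₃ - x₂) h32v]
      congr 1 <;> abel
    rw [hshift, norm_perp _ _ h23v, hang]
  have e2A : ‖n₂‖ = ‖x₂ - x₁‖ * Real.sin (EuclideanGeometry.angle x₂ x₁ x₃) := by
    rw [hn₂def, norm_perp _ _ h31v, hang]
  have e2C : ‖n₂‖ = ‖x₂ - x₃‖ * Real.sin (EuclideanGeometry.angle x₁ x₃ x₂) := by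
    have hshift : n₂ = perp (x₂ - x₃) (x₁ - x₃) := by
      rw [hn₂def, ← perp_shift (x₂ - x₁) (x₃ - x₁) h31v]
      congr 1 <;> abel
    rw [hshift, norm_perp _ _ h13v, EuclideanGeometry.angle_comm x₁ x₃ x₂, hang]
  have e3B : ‖n₃‖ = ‖x₃ - x₂‖ * Real.sin (EuclideanGeometry.angle x₁ x₂ x₃) := by
    rw [hn₃def, norm_perp _ _ h12v, EuclideanGeometry.angle_comm x₁ x₂ x₃, hang]
  have e3A : ‖n₃‖ = ‖x₃ - x₁‖ * Real.sin (EuclideanGeometry.angle x₂ x₁ x₃) := by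
    have hshift : n₃ = perp (x₃ - x₁) (x₂ - x₁) := by
      rw [hn₃def, ← perp_shift (x₃ - x₂) (x₁ - x₂) h12v]
      congr 1 <;> abel
    rw [hshift, norm_perp _ _ h21v, EuclideanGeometry.angle_comm x₂ x₁ x₃, hang]
  -- the diameter candidate
  set d := max (max ‖x₁ - x₂‖ ‖x₁ - x₃‖) ‖x₂ - x₃‖ with hddef
  have m12 : ‖x₁ - x₂‖ ≤ d := le_trans (le_max_left _ _) (le_max_left _ _)
  have m13 : ‖x₁ - x₃‖ ≤ d := le_trans (le_max_right _ _) (le_max_left _ _)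
  have m23 : ‖x₂ - x₃‖ ≤ d := le_max_right _ _
  have hd0 : 0 < d := lt_of_lt_of_le (norm_pos_iff.mpr h12v) m12
  have hd1 : d ≤ ‖x₁ - x₂‖ + ‖x₁ - x₃‖ := by
    rw [hddef]
    refine max_le (max_le ?_ ?_) ?_
    · linarith [norm_nonneg (x₁ - x₃)]
    · linarith [norm_nonneg (x₁ - x₂)]
    · calc ‖x₂ - x₃‖ = ‖(x₂ - x₁) - (x₃ - x₁)‖ := by congr 1; abel
        _ ≤ ‖x₂ - x₁‖ + ‖x₃ - x₁‖ := norm_sub_le _ _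
        _ = ‖x₁ - x₂‖ + ‖x₁ - x₃‖ := by rw [norm_sub_rev, norm_sub_rev x₃]
  have hd2 : d ≤ ‖x₂ - x₁‖ + ‖x₂ - x₃‖ := by
    rw [hddef]
    refine max_le (max_le ?_ ?_) ?_
    · rw [norm_sub_rev]; linarith [norm_nonneg (x₂ - x₃)]
    · calc ‖x₁ - x₃‖ = ‖(x₂ - x₃) - (x₂ - x₁)‖ := by congr 1; abel
        _ ≤ ‖x₂ - x₃‖ + ‖x₂ - x₁‖ := norm_sub_le _ _
        _ = ‖x₂ - x₁‖ + ‖x₂ - x₃‖ := by ring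
    · linarith [norm_nonneg (x₂ - x₁)]
  have hd3 : d ≤ ‖x₃ - x₂‖ + ‖x₃ - x₁‖ := by
    rw [hddef]
    refine max_le (max_le ?_ ?_) ?_
    · calc ‖x₁ - x₂‖ = ‖(x₃ - x₂) - (x₃ - x₁)‖ := by congr 1; abel
        _ ≤ ‖x₃ - x₂‖ + ‖x₃ - x₁‖ := norm_sub_le _ _
    · rw [norm_sub_rev]; linarith [norm_nonneg (x₃ - x₂)]
    · rw [norm_sub_rev]; linarith [norm_nonneg (x₃ - x₁)]
  -- height lower bounds
  have hb1 : d * Real.sin α / 2 ≤ ‖n₁‖ :=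
    height_lb e1B e1C (norm_nonneg _) (norm_nonneg _) hsB hsC hsinα.le hd1
  have hb2 : d * Real.sin α / 2 ≤ ‖n₂‖ :=
    height_lb e2A e2C (norm_nonneg _) (norm_nonneg _) hsA hsC hsinα.le hd2
  have hb3 : d * Real.sin α / 2 ≤ ‖n₃‖ :=
    height_lb e3B e3A (norm_nonneg _) (norm_nonneg _) hsB hsA hsinα.le hd3
  have hds : 0 < d * Real.sin α / 2 := by
    have := mul_pos hd0 hsinα; linarith
  have hn1pos : 0 < ‖n₁‖ := lt_of_lt_of_le hds hb1
  have hn2pos : 0 < ‖n₂‖ := lt_of_lt_of_le hds hb2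
  have hn3pos : 0 < ‖n₃‖ := lt_of_lt_of_le hds hb3
  set r := d * Real.sin α / 6 with hrdef
  have hr0 : 0 < r := by rw [hrdef]; linarith
  have h3r1 : 3 * r ≤ ‖n₁‖ := by rw [hrdef]; linarith
  have h3r2 : 3 * r ≤ ‖n₂‖ := by rw [hrdef]; linarith
  have h3r3 : 3 * r ≤ ‖n₃‖ := by rw [hrdef]; linarith
  set cent := (3⁻¹ : ℝ) • (x₁ + x₂ + x₃) with hcentdef
  refine ⟨cent, r, hr0, ?_, ?_⟩
  · -- ball ⊆ triangle
    intro p hp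
    rw [Metric.mem_closedBall] at hp
    have hpnorm : ‖p - cent‖ ≤ r := by rw [← dist_eq_norm]; exact hp
    -- inner product facts
    have hun1 : ⟪n₁, x₃ - x₂⟫ = 0 := by rw [hn₁def]; exact inner_perp_right _ _ h32v
    have hun1' : ⟪x₃ - x₂, n₁⟫ = 0 := by rw [real_inner_comm]; exact hun1
    have hwn1 : ⟪x₁ - x₂, n₁⟫ = ‖n₁‖ ^ 2 := by rw [hn₁def]; exact inner_self_perp _ _ h32v
    have hwn3 : ⟪x₁ - x₂, n₃⟫ = 0 := by
      rw [real_inner_comm, hn₃def]; exact inner_perp_right _ _ h12v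
    have hun3 : ⟪x₃ - x₂, n₃⟫ = ‖n₃‖ ^ 2 := by rw [hn₃def]; exact inner_self_perp _ _ h12v
    have hwn2 : ⟪x₂ - x₁, n₂⟫ = ‖n₂‖ ^ 2 := by rw [hn₂def]; exact inner_self_perp _ _ h31v
    have hun2 : ⟪x₃ - x₁, n₂⟫ = 0 := by
      rw [real_inner_comm, hn₂def]; exact inner_perp_right _ _ h31v
    have hn1norm : ‖n₁‖ ≠ 0 := ne_of_gt hn1pos
    have hn2norm : ‖n₂‖ ≠ 0 := ne_of_gt hn2pos
    have hn3norm : ‖n₃‖ ≠ 0 := ne_of_gt hn3pos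
    have hu1norm : ‖x₃ - x₂‖ ≠ 0 := norm_ne_zero_iff.mpr h32v
    have hn1ne : n₁ ≠ 0 := norm_ne_zero_iff.mp hn1norm
    -- span
    have hspan : ∀ z : EuclideanSpace ℝ (Fin 2),
        z ∈ Submodule.span ℝ ({x₃ - x₂, n₁} : Set (EuclideanSpace ℝ (Fin 2))) := by
      have hli : LinearIndependent ℝ ![x₃ - x₂, n₁] := by
        rw [LinearIndependent.pair_iff]
        intro s' t' hst
        have h1 : ⟪s' • (x₃ - x₂) + t' • n₁, x₃ - x₂⟫ = (0 : ℝ) := by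
          rw [hst, inner_zero_left]
        have h2 : ⟪s' • (x₃ - x₂) + t' • n₁, n₁⟫ = (0 : ℝ) := by
          rw [hst, inner_zero_left]
        rw [inner_add_left, real_inner_smul_left, real_inner_smul_left,
          real_inner_self_eq_norm_sq, hun1] at h1
        rw [inner_add_left, real_inner_smul_left, real_inner_smul_left,
          real_inner_self_eq_norm_sq, hun1'] at h2
        constructor
        · have h1' : s' * ‖x₃ - x₂‖ ^ 2 = 0 := by linarith
          exact (mul_eq_zero.mp h1').resolve_right (pow_ne_zero 2 hu1norm)
        · have h2' : t' * ‖n₁‖ ^ 2 = 0 := by linarith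
          exact (mul_eq_zero.mp h2').resolve_right (pow_ne_zero 2 hn1norm)
      have hsp : Submodule.span ℝ (Set.range ![x₃ - x₂, n₁]) = ⊤ := by
        apply Submodule.eq_top_of_finrank_eq
        rw [finrank_span_eq_card hli]
        simp
      have hrange : Set.range ![x₃ - x₂, n₁] = {x₃ - x₂, n₁} := by
        ext y; simp [Fin.exists_fin_two, or_comm]
      intro z
      have hz : z ∈ (⊤ : Submodule ℝ (EuclideanSpace ℝ (Fin 2))) := trivial
      rw [← hsp, hrange] at hz
      exact hz
    set t := ⟪p - x₂, n₁⟫ / ‖n₁‖ ^ 2 with htdef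
    set s := ⟪p - x₂, x₃ - x₂⟫ / ‖x₃ - x₂‖ ^ 2 with hsdef
    have hq0 : (p - x₂) - t • n₁ - s • (x₃ - x₂) = 0 := by
      set q := (p - x₂) - t • n₁ - s • (x₃ - x₂) with hqdef
      have hq1 : ⟪q, x₃ - x₂⟫ = (0 : ℝ) := by
        rw [hqdef, inner_sub_left, inner_sub_left, real_inner_smul_left, real_inner_smul_left,
          hun1, real_inner_self_eq_norm_sq, hsdef]
        field_simp
        ring
      have hq2 : ⟪q, n₁⟫ = (0 : ℝ) := by
        rw [hqdef, inner_sub_left, inner_sub_left, real_inner_smul_left, real_inner_smul_left,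
          real_inner_self_eq_norm_sq, hun1', htdef]
        field_simp
        ring
      obtain ⟨a', b', hab⟩ := Submodule.mem_span_pair.mp (hspan q)
      have hz : ⟪q, q⟫ = (0 : ℝ) := by
        rw [← hab, inner_add_right, real_inner_smul_right, real_inner_smul_right, hab, hq1,
          hq2]
        ring
      exact inner_self_eq_zero.mp hz
    have hq : p - x₂ = t • n₁ + s • (x₃ - x₂) := by
      rw [sub_sub, sub_eq_zero] at hq0
      exact hq0
    set c := s - t * (⟪x₁ - x₂, x₃ - x₂⟫ / ‖x₃ - x₂‖ ^ 2) with hcdef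
    have hp2 : p = x₂ + (t • n₁ + s • (x₃ - x₂)) := by rw [← hq]; abel
    have hcomb : p = t • x₁ + (1 - t - c) • x₂ + c • x₃ := by
      rw [hp2, hn₁def]
      unfold perp
      rw [hcdef]
      module
    -- coefficients nonneg
    have hpsub : (p - x₂) - (cent - x₂) = p - cent := by abel
    have hpsub' : (p - x₁) - (cent - x₁) = p - cent := by abel
    have hcb1 : ⟪cent - x₂, n₁⟫ = ‖n₁‖ ^ 2 / 3 := by
      have h : cent - x₂ = (3⁻¹ : ℝ) • ((x₁ - x₂) + (x₃ - x₂)) := by rw [hcentdef]; module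
      rw [h, real_inner_smul_left, inner_add_left, hwn1, hun1']
      ring
    have hcb3 : ⟪cent - x₂, n₃⟫ = ‖n₃‖ ^ 2 / 3 := by
      have h : cent - x₂ = (3⁻¹ : ℝ) • ((x₁ - x₂) + (x₃ - x₂)) := by rw [hcentdef]; module
      rw [h, real_inner_smul_left, inner_add_left, hwn3, hun3]
      ring
    have hcb2 : ⟪cent - x₁, n₂⟫ = ‖n₂‖ ^ 2 / 3 := by
      have h : cent - x₁ = (3⁻¹ : ℝ) • ((x₂ - x₁) + (x₃ - x₁)) := by rw [hcentdef]; module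
      rw [h, real_inner_smul_left, inner_add_left, hwn2, hun2]
      ring
    have ha0 : 0 ≤ t := by
      have h := coeff_nonneg hn1pos h3r1 (by rw [hpsub]; exact hpnorm) hcb1
      rw [htdef]
      exact h
    have hpw : p - x₂ = t • (x₁ - x₂) + c • (x₃ - x₂) := by
      rw [hcomb]; module
    have hinner3 : ⟪p - x₂, n₃⟫ = c * ‖n₃‖ ^ 2 := by
      rw [hpw, inner_add_left, real_inner_smul_left, real_inner_smul_left, hwn3, hun3]
      ring
    have hc0 : 0 ≤ c := by
      have h := coeff_nonneg hn3pos h3r3 (by rw [hpsub]; exact hpnorm) hcb3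
      rw [hinner3, mul_div_cancel_right₀ _ (pow_ne_zero 2 hn3norm)] at h
      exact h
    have hpw2 : p - x₁ = (1 - t - c) • (x₂ - x₁) + c • (x₃ - x₁) := by
      rw [hcomb]; module
    have hinner2 : ⟪p - x₁, n₂⟫ = (1 - t - c) * ‖n₂‖ ^ 2 := by
      rw [hpw2, inner_add_left, real_inner_smul_left, real_inner_smul_left, hwn2, hun2]
      ring
    have hb0 : 0 ≤ 1 - t - c := by
      have h := coeff_nonneg hn2pos h3r2 (by rw [hpsub']; exact hpnorm) hcb2
      rw [hinner2, mul_div_cancel_right₀ _ (pow_ne_zero 2 hn2norm)] at h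
      exact h
    -- membership
    have hconv := convex_convexHull ℝ ({x₁, x₂, x₃} : Set (EuclideanSpace ℝ (Fin 2)))
    have hsum3 : ∑ i : Fin 3, ![t, 1 - t - c, c] i • ![x₁, x₂, x₃] i
        = t • x₁ + (1 - t - c) • x₂ + c • x₃ := by
      simp [Fin.sum_univ_three]
    rw [hcomb, ← hsum3]
    apply hconv.sum_mem
    · intro i _
      fin_cases i
      · simpa using ha0
      · simpa using hb0
      · simpa using hc0
    · simp [Fin.sum_univ_three]
      ring
    · intro i _
      fin_cases i
      · exact subset_convexHull ℝ _ (by simp)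
      · exact subset_convexHull ℝ _ (by simp)
      · exact subset_convexHull ℝ _ (by simp)
  · -- diameter bound
    rw [convexHull_diam]
    have hdiam : Metric.diam ({x₁, x₂, x₃} : Set (EuclideanSpace ℝ (Fin 2))) ≤ d := by
      apply Metric.diam_le_of_forall_dist_le hd0.le
      intro y hy z hz
      simp only [Set.mem_insert_iff, Set.mem_singleton_iff] at hy hz
      rcases hy with rfl | rfl | rfl <;> rcases hz with rfl | rfl | rfl
      · simp [dist_self, hd0.le]
      · rw [dist_eq_norm]; exact m12
      · rw [dist_eq_norm]; exact m13
      · rw [dist_eq_norm, norm_sub_rev]; exact m12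
      · simp [dist_self, hd0.le]
      · rw [dist_eq_norm]; exact m23
      · rw [dist_eq_norm, norm_sub_rev]; exact m13
      · rw [dist_eq_norm, norm_sub_rev]; exact m23
      · simp [dist_self, hd0.le]
    calc Metric.diam ({x₁, x₂, x₃} : Set (EuclideanSpace ℝ (Fin 2))) ≤ d := hdiam
      _ = 2 * r * (3 / Real.sin α) := by
          rw [hrdef]
          field_simp
          ring
end

section
/- For every D ≥ 1 there exists α > 0 such that every triangle τ = conv{x₁, x₂, x₃} ⊆ ℝ² satisfying the shape regularity condition with constant D (there exist c ∈ ℝ² and r > 0 with closedBall(c, r) ⊆ τ and diam τ ≤ 2rD) satisfies the minimum angle condition with respect to α: all three inner angles of τ are ≥ α. -/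
open Metric InnerProductGeometry
open scoped RealInnerProductSpace

set_option maxHeartbeats 1000000 in
lemma aux13 (D r : ℝ) (hD : 1 ≤ D) (hr : 0 < r) (x₁ x₂ x₃ c : EuclideanSpace ℝ (Fin 2))
    (hcol : ¬ Collinear ℝ ({x₁, x₂, x₃} : Set (EuclideanSpace ℝ (Fin 2))))
    (hball : Metric.closedBall c r ⊆ convexHull ℝ {x₁, x₂, x₃})
    (hdiam : Metric.diam (convexHull ℝ {x₁, x₂, x₃} : Set (EuclideanSpace ℝ (Fin 2))) ≤
      2 * r * D) :
    Real.arcsin (1 / (2 * D)) ≤ EuclideanGeometry.angle x₂ x₁ x₃ := by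
  set u : EuclideanSpace ℝ (Fin 2) := x₂ - x₁ with hu_def
  set w : EuclideanSpace ℝ (Fin 2) := x₃ - x₁ with hw_def
  have hx12 : x₂ ≠ x₁ := by
    rintro rfl
    exact hcol (by simpa using collinear_pair ℝ x₂ x₃)
  have hu : u ≠ 0 := sub_ne_zero.2 hx12
  have hunorm : (0:ℝ) < ‖u‖ := norm_pos_iff.2 hu
  set t : ℝ := ⟪u, w⟫ / ‖u‖ ^ 2 with ht_def
  set q : EuclideanSpace ℝ (Fin 2) := w - t • u with hq_def
  have huq : ⟪u, q⟫ = 0 := by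
    rw [hq_def, inner_sub_right, real_inner_smul_right, ht_def,
      real_inner_self_eq_norm_sq]
    field_simp
    ring
  have hq0 : q ≠ 0 := by
    intro h
    apply hcol
    have hw3 : x₃ = t • u + x₁ := by
      have : w = t • u := by rwa [hq_def, sub_eq_zero] at h
      rw [← this, hw_def]; abel
    rw [collinear_iff_of_mem (Set.mem_insert x₁ _)]
    refine ⟨u, ?_⟩
    intro p hp
    simp only [Set.mem_insert_iff, Set.mem_singleton_iff] at hp
    rcases hp with rfl | rfl | rfl
    · exact ⟨0, by simp⟩
    · refine ⟨1, ?_⟩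
      simp only [one_smul, vadd_eq_add, hu_def]
      abel
    · exact ⟨t, by simp [vadd_eq_add]; rw [hw3]⟩
  have hqnorm : (0:ℝ) < ‖q‖ := norm_pos_iff.2 hq0
  set n : EuclideanSpace ℝ (Fin 2) := ‖q‖⁻¹ • q with hn_def
  have hun : ⟪u, n⟫ = 0 := by rw [hn_def, real_inner_smul_right, huq, mul_zero]
  have hnn : ⟪n, n⟫ = 1 := by
    rw [hn_def, real_inner_smul_right, real_inner_smul_left, real_inner_self_eq_norm_sq]
    field_simp
  have hwn : ⟪w, n⟫ = ‖q‖ := by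
    have hw : w = q + t • u := by rw [hq_def]; abel
    rw [hw, inner_add_left, real_inner_smul_left, hn_def, real_inner_smul_right,
      real_inner_smul_right, huq, real_inner_self_eq_norm_sq]
    field_simp
    ring
  have hlin : IsLinearMap ℝ (fun y : EuclideanSpace ℝ (Fin 2) => ⟪y, n⟫) :=
    ⟨fun a b => inner_add_left a b n, fun c a => real_inner_smul_left a n c⟩
  -- lower halfspace
  have hS : convexHull ℝ ({x₁, x₂, x₃} : Set (EuclideanSpace ℝ (Fin 2))) ⊆
      {y | ⟪x₁, n⟫ ≤ ⟪y, n⟫} := by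
    apply convexHull_min _ (convex_halfSpace_ge hlin _)
    have h3 : ⟪x₃, n⟫ - ⟪x₁, n⟫ = ‖q‖ := by rw [← hwn, hw_def, inner_sub_left]
    have h2 : ⟪x₂, n⟫ - ⟪x₁, n⟫ = 0 := by rw [← hun, hu_def, inner_sub_left]
    intro p hp
    simp only [Set.mem_insert_iff, Set.mem_singleton_iff] at hp
    rcases hp with rfl | rfl | rfl <;> simp only [Set.mem_setOf_eq] <;> linarith [hqnorm]
  have hS' : convexHull ℝ ({x₁, x₂, x₃} : Set (EuclideanSpace ℝ (Fin 2))) ⊆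
      {y | ⟪y, n⟫ ≤ ⟪x₃, n⟫} := by
    apply convexHull_min _ (convex_halfSpace_le hlin _)
    have h3 : ⟪x₃, n⟫ - ⟪x₁, n⟫ = ‖q‖ := by rw [← hwn, hw_def, inner_sub_left]
    have h2 : ⟪x₂, n⟫ - ⟪x₁, n⟫ = 0 := by rw [← hun, hu_def, inner_sub_left]
    intro p hp
    simp only [Set.mem_insert_iff, Set.mem_singleton_iff] at hp
    rcases hp with rfl | rfl | rfl <;> simp only [Set.mem_setOf_eq] <;> linarith [hqnorm]
  have hc1 : ⟪x₁, n⟫ + r ≤ ⟪c, n⟫ := by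
    have hmem : c - r • n ∈ Metric.closedBall c r := by
      rw [mem_closedBall, dist_eq_norm]
      have : c - r • n - c = -(r • n) := by abel
      rw [this, norm_neg, norm_smul]
      have : ‖n‖ = 1 := by
        have := hnn
        rw [real_inner_self_eq_norm_sq] at this
        nlinarith [norm_nonneg n]
      simp [this, abs_of_pos hr]
    have := hS (hball hmem)
    simp only [Set.mem_setOf_eq, inner_sub_left, real_inner_smul_left, hnn] at this
    linarith
  have hc2 : ⟪c, n⟫ ≤ ⟪x₃, n⟫ := hS' (hball (Metric.mem_closedBall_self hr.le))
  have hrq : r ≤ ‖q‖ := by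
    have h3 : ⟪x₃, n⟫ - ⟪x₁, n⟫ = ‖q‖ := by rw [← hwn, hw_def, inner_sub_left]
    linarith
  -- norm of w bounded by diameter
  have hw0 : w ≠ 0 := by
    intro h
    rw [hq_def, h] at hq0
    have : ⟪u, (0:EuclideanSpace ℝ (Fin 2)) - t • u⟫ = -t * ‖u‖^2 := by
      rw [inner_sub_right, real_inner_smul_right, real_inner_self_eq_norm_sq, inner_zero_right]
      ring
    rw [hq_def, h] at huq
    rw [huq] at this
    have ht0 : t = 0 := by
      by_contra ht
      have := this.symm
      have : t * ‖u‖^2 = 0 := by linarith [this]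
      rcases mul_eq_zero.1 this with h' | h'
      · exact ht h'
      · nlinarith
    apply hq0
    simp [ht0]
  have hwnorm : (0:ℝ) < ‖w‖ := norm_pos_iff.2 hw0
  have hwle : ‖w‖ ≤ 2 * r * D := by
    have h1 : x₁ ∈ convexHull ℝ ({x₁, x₂, x₃} : Set (EuclideanSpace ℝ (Fin 2))) :=
      subset_convexHull ℝ _ (Set.mem_insert _ _)
    have h3 : x₃ ∈ convexHull ℝ ({x₁, x₂, x₃} : Set (EuclideanSpace ℝ (Fin 2))) :=
      subset_convexHull ℝ _ (by simp)
    have hb : Bornology.IsBounded (convexHull ℝ ({x₁, x₂, x₃} : Set (EuclideanSpace ℝ (Fin 2)))) := by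
      rw [isBounded_convexHull]
      exact (Set.toFinite _).isBounded
    have := Metric.dist_le_diam_of_mem hb h3 h1
    rw [dist_eq_norm] at this
    exact le_trans (by rw [hw_def]) (this.trans hdiam)
  -- the sine bound
  set θ : ℝ := EuclideanGeometry.angle x₂ x₁ x₃ with hθ_def
  have hθeq : θ = InnerProductGeometry.angle u w := by
    rw [hθ_def, EuclideanGeometry.angle, hu_def, hw_def]
    norm_num [vsub_eq_sub]
  have hsin := InnerProductGeometry.sin_angle_mul_norm_mul_norm u w
  have hinner : ⟪u, u⟫ * ⟪w, w⟫ - ⟪u, w⟫ * ⟪u, w⟫ = ‖u‖^2 * ‖q‖^2 := by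
    have hw : w = q + t • u := by rw [hq_def]; abel
    have h1 : ⟪u, w⟫ = t * ‖u‖^2 := by
      rw [hw, inner_add_right, real_inner_smul_right, huq, real_inner_self_eq_norm_sq]; ring
    have h2 : ⟪w, w⟫ = ‖q‖^2 + t^2 * ‖u‖^2 := by
      have hqu : ⟪q, u⟫ = (0:ℝ) := by rw [real_inner_comm]; exact huq
      rw [hw, real_inner_add_add_self]
      simp only [real_inner_smul_left, real_inner_smul_right, real_inner_self_eq_norm_sq]
      rw [hqu, norm_smul, mul_pow, Real.norm_eq_abs, sq_abs]
      ring
    rw [h1, h2, real_inner_self_eq_norm_sq]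
    ring
  rw [hinner] at hsin
  have hsqrt : Real.sqrt (‖u‖^2 * ‖q‖^2) = ‖u‖ * ‖q‖ := by
    rw [← mul_pow, Real.sqrt_sq (by positivity)]
  rw [hsqrt] at hsin
  have hsinθ : Real.sin θ * ‖w‖ = ‖q‖ := by
    rw [hθeq]
    have h := hsin
    have : Real.sin (InnerProductGeometry.angle u w) * ‖w‖ * ‖u‖ = ‖q‖ * ‖u‖ := by
      linear_combination h
    exact mul_right_cancel₀ (ne_of_gt hunorm) this
  have hθ0 : 0 ≤ θ := EuclideanGeometry.angle_nonneg _ _ _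
  have hθpi : θ ≤ Real.pi := EuclideanGeometry.angle_le_pi _ _ _
  have hsin_lb : 1 / (2 * D) ≤ Real.sin θ := by
    have hsinnn : 0 ≤ Real.sin θ := Real.sin_nonneg_of_nonneg_of_le_pi hθ0 hθpi
    have h1 : r ≤ Real.sin θ * ‖w‖ := by rw [hsinθ]; exact hrq
    have h2 : Real.sin θ * ‖w‖ ≤ Real.sin θ * (2 * r * D) :=
      mul_le_mul_of_nonneg_left hwle hsinnn
    rw [div_le_iff₀ (by positivity)]
    have : r ≤ Real.sin θ * (2 * r * D) := le_trans h1 h2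
    nlinarith
  rcases le_or_gt θ (Real.pi / 2) with hc | hc
  · calc Real.arcsin (1 / (2 * D)) ≤ Real.arcsin (Real.sin θ) :=
        Real.monotone_arcsin hsin_lb
    _ = θ := Real.arcsin_sin (by linarith [Real.pi_pos]) hc
  · exact le_trans (Real.arcsin_le_pi_div_two _) hc.le



/-- For every `D ≥ 1` there exists `α > 0` such that every triangle in ℝ²
satisfying the shape regularity condition with constant `D` (it contains a closed ball
of some radius `r > 0` with `diam τ ≤ 2 r D`) has all three inner angles at least
`α`. -/
theorem stmt13 (D : ℝ) (hD : 1 ≤ D) :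
    ∃ α : ℝ, 0 < α ∧
      ∀ x₁ x₂ x₃ : EuclideanSpace ℝ (Fin 2), AffineIndependent ℝ ![x₁, x₂, x₃] →
        (∃ (c : EuclideanSpace ℝ (Fin 2)) (r : ℝ), 0 < r ∧
          Metric.closedBall c r ⊆ convexHull ℝ {x₁, x₂, x₃} ∧
          Metric.diam (convexHull ℝ {x₁, x₂, x₃} : Set (EuclideanSpace ℝ (Fin 2))) ≤
            2 * r * D) →
        α ≤ EuclideanGeometry.angle x₂ x₁ x₃ ∧
        α ≤ EuclideanGeometry.angle x₁ x₂ x₃ ∧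
        α ≤ EuclideanGeometry.angle x₁ x₃ x₂ := by
  refine ⟨Real.arcsin (1 / (2 * D)), Real.arcsin_pos.2 (by positivity), ?_⟩
  intro x₁ x₂ x₃ hind ⟨c, r, hr, hball, hdiam⟩
  have hcol : ¬ Collinear ℝ ({x₁, x₂, x₃} : Set (EuclideanSpace ℝ (Fin 2))) :=
    affineIndependent_iff_not_collinear_set.1 hind
  have hset2 : ({x₂, x₁, x₃} : Set (EuclideanSpace ℝ (Fin 2))) = {x₁, x₂, x₃} :=
    Set.insert_comm _ _ _
  have hset3 : ({x₃, x₁, x₂} : Set (EuclideanSpace ℝ (Fin 2))) = {x₁, x₂, x₃} := by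
    rw [Set.insert_comm]
    congr 1
    exact Set.pair_comm _ _
  refine ⟨aux13 D r hD hr x₁ x₂ x₃ c hcol hball hdiam, ?_, ?_⟩
  · exact aux13 D r hD hr x₂ x₁ x₃ c (by rwa [hset2]) (by rwa [hset2]) (by rwa [hset2])
  · exact aux13 D r hD hr x₃ x₁ x₂ c (by rwa [hset3]) (by rwa [hset3]) (by rwa [hset3])
end
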